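/- arXiv:2302.10770 — 7 statements merged into one kernel-verified Lean document; each statement's English description precedes it below -/
import Mathlib

section
/- In any edge-coloring of a complete graph (on at least 2 vertices) containing no rainbow triangle, there exists a nontrivial partition of the vertex set into parts H_1,...,H_t (t ≥ 2) such that at most two colors appear on edges between distinct parts, and for each pair of distinct parts H_i, H_j, all edges between H_i and H_j receive the same color. -/
/-!
For colours `r, b` let `G_{r,b}` be the graph of the edges coloured neither `r` nor `b`. If an
edge `x x'` of `G_{r,b}` and a vertex `y` outside its component span a triangle, the sides
`x y` and `x' y` are coloured in `{r, b}`, so they must agree. Hence the colour between two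
components of `G_{r,b}` is constant and lies in `{r, b}`, and the components form the required
partition as soon as `G_{r,b}` is disconnected for some `r, b`.

That is proved by induction on `|V|`, deleting a vertex `v`. If some component of `V ∖ {v}`
meets `v` only in colours `r, b`, it stays separated from `v` in `G_{r,b}`. Otherwise every component
sends an edge of colour `∉ {r, b}` to `v`; comparing triangles shows that all these edges share
one colour `g` and all `{r, b}`-coloured edges at `v` share one colour `e`, so `v` is isolated
in `G_{g,e}`.
-/

open SimpleGraph Function

namespace GR

/-- The set of copies of a graph `H` (assumed without isolated vertices, so a copy is
identified with its edge set) inside the complete graph on `Fin n`. -/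
def copies {α : Type} (H : SimpleGraph α) (n : ℕ) : Set (Set (Sym2 (Fin n))) :=
  {S | ∃ f : α → Fin n, Function.Injective f ∧ S = (Sym2.map f) '' H.edgeSet}

/-- `S` is a monochromatic copy of `H` under the edge-coloring `c`. -/
def IsMonoCopy {α C : Type} (H : SimpleGraph α) {n : ℕ}
    (c : Sym2 (Fin n) → C) (S : Set (Sym2 (Fin n))) : Prop :=
  S ∈ copies H n ∧ ∃ col, ∀ e ∈ S, c e = col

/-- `S` is a rainbow copy of `G` under the edge-coloring `c`. -/
def IsRainbowCopy {α C : Type} (G : SimpleGraph α) {n : ℕ}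
    (c : Sym2 (Fin n) → C) (S : Set (Sym2 (Fin n))) : Prop :=
  S ∈ copies G n ∧ Set.InjOn c S

def HasMonoCopy {α C : Type} (H : SimpleGraph α) {n : ℕ} (c : Sym2 (Fin n) → C) : Prop :=
  ∃ S, IsMonoCopy H c S

def HasRainbowCopy {α C : Type} (G : SimpleGraph α) {n : ℕ} (c : Sym2 (Fin n) → C) : Prop :=
  ∃ S, IsRainbowCopy G c S

/-- The `k`-colored Gallai-Ramsey number `gr_k(G : H)`. -/
noncomputable def gr {α β : Type} (k : ℕ) (G : SimpleGraph α) (H : SimpleGraph β) : ℕ :=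
  sInf {n | ∀ c : Sym2 (Fin n) → Fin k, HasRainbowCopy G c ∨ HasMonoCopy H c}

/-- The diagonal `k`-colored Ramsey number `r_k(H)`. -/
noncomputable def ramsey {β : Type} (k : ℕ) (H : SimpleGraph β) : ℕ :=
  sInf {n | ∀ c : Sym2 (Fin n) → Fin k, HasMonoCopy H c}

/-- The matching with `n` edges, `nK₂`. -/
def nK2 (n : ℕ) : SimpleGraph (Fin n × Fin 2) :=
  SimpleGraph.fromRel (fun a b => a.1 = b.1)

/-- The path on 5 vertices. -/
def P5 : SimpleGraph (Fin 5) := SimpleGraph.pathGraph 5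

/-- The star with three leaves. -/
def K13 : SimpleGraph (Fin 1 ⊕ Fin 3) := completeBipartiteGraph (Fin 1) (Fin 3)

/-- The triangle. -/
def K3 : SimpleGraph (Fin 3) := completeGraph (Fin 3)

/-- Number of monochromatic copies of `H` under the coloring `c`. -/
noncomputable def monoCopyCount {α C : Type} (H : SimpleGraph α) {n : ℕ}
    (c : Sym2 (Fin n) → C) : ℕ :=
  Set.ncard {S | IsMonoCopy H c S}

/-- Number of rainbow copies of `G` under the coloring `c`. -/
noncomputable def rainbowCopyCount {α C : Type} (G : SimpleGraph α) {n : ℕ}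
    (c : Sym2 (Fin n) → C) : ℕ :=
  Set.ncard {S | IsRainbowCopy G c S}

/-- The Gallai-Ramsey multiplicity: the minimum, over exact `k`-colorings of the complete
graph on `gr_k(G:H)` vertices, of the number of rainbow copies of `G` plus the number of
monochromatic copies of `H`. -/
noncomputable def GM {α β : Type} (k : ℕ) (G : SimpleGraph α) (H : SimpleGraph β) : ℕ :=
  sInf {t | ∃ c : Sym2 (Fin (gr k G H)) → Fin k, Surjective c ∧
    t = rainbowCopyCount G c + monoCopyCount H c}

end GR

theorem SimpleGraph.Reachable.mem_of_adj_closed {V : Type*} {G : SimpleGraph V} {S : Set V}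
    (hS : ∀ ⦃u w⦄, u ∈ S → G.Adj u w → w ∈ S) {x y : V} (h : G.Reachable x y) (hx : x ∈ S) :
    y ∈ S := by
  rw [reachable_iff_reflTransGen] at h
  induction h with
  | refl => exact hx
  | tail _ hadj ih => exact hS ih hadj

theorem Finpartition.rel_iff_of_mem_ofSetoid {α : Type*} [Fintype α] [DecidableEq α]
    {s : Setoid α} [DecidableRel s.r] {p : Finset α} (hp : p ∈ (Finpartition.ofSetoid s).parts)
    {x y : α} (hx : x ∈ p) : y ∈ p ↔ s x y := by
  rw [← Finpartition.part_eq_of_mem _ hp hx, Finpartition.mem_part_ofSetoid_iff_rel]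

theorem SimpleGraph.exists_not_reachable_of_not_preconnected {V : Type*} {G : SimpleGraph V}
    (h : ¬G.Preconnected) (u : V) : ∃ z, ¬G.Reachable u z := by
  by_contra! hu
  exact h fun x y => (hu x).symm.trans (hu y)

namespace Gallai

variable {V W C : Type*}

def NoRainbowTriangle (c : Sym2 V → C) : Prop :=
  ∀ ⦃a b d : V⦄, a ≠ b → a ≠ d → b ≠ d →
    c s(a, b) ≠ c s(a, d) → c s(a, b) ≠ c s(b, d) → c s(a, d) = c s(b, d)

lemma NoRainbowTriangle.comp_map {c : Sym2 V → C} (hc : NoRainbowTriangle c) {f : W → V}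
    (hf : Injective f) : NoRainbowTriangle (c ∘ Sym2.map f) :=
  fun _ _ _ hab had hbd => hc (hf.ne hab) (hf.ne had) (hf.ne hbd)

def avoidGraph (c : Sym2 V → C) (K : Set C) : SimpleGraph V where
  Adj u w := u ≠ w ∧ c s(u, w) ∉ K
  symm := ⟨fun u w h => ⟨h.1.symm, by rw [Sym2.eq_swap]; exact h.2⟩⟩
  loopless := ⟨fun _ h => h.1 rfl⟩

section avoidGraph

variable {c : Sym2 V → C} {K : Set C}

lemma color_mem_of_not_reachable {x y : V} (h : ¬(avoidGraph c K).Reachable x y) :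
    c s(x, y) ∈ K := by
  by_contra hK
  have hxy : x ≠ y := fun hxy => h (hxy ▸ .rfl)
  exact h (SimpleGraph.Adj.reachable ⟨hxy, hK⟩)

lemma color_eq_of_reachable (hc : NoRainbowTriangle c) {x x' y : V}
    (hxx' : (avoidGraph c K).Reachable x x') (hxy : ¬(avoidGraph c K).Reachable x y) :
    c s(x, y) = c s(x', y) := by
  rw [SimpleGraph.reachable_iff_reflTransGen] at hxx'
  induction hxx' with
  | refl => rfl
  | @tail a a' hxa hadj ih =>
    have hay : ¬(avoidGraph c K).Reachable a y :=
      fun h => hxy (((SimpleGraph.reachable_iff_reflTransGen x a).mpr hxa).trans h)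
    have ha'y : ¬(avoidGraph c K).Reachable a' y := fun h => hay (hadj.reachable.trans h)
    refine ih.trans (hc hadj.1 (fun h => hay (h ▸ .rfl)) (fun h => ha'y (h ▸ .rfl)) ?_ ?_)
    · exact ne_of_mem_of_not_mem (color_mem_of_not_reachable hay) hadj.2 |>.symm
    · exact ne_of_mem_of_not_mem (color_mem_of_not_reachable ha'y) hadj.2 |>.symm

lemma color_eq_of_reachable_of_reachable (hc : NoRainbowTriangle c) {x x' y y' : V}
    (hxx' : (avoidGraph c K).Reachable x x') (hyy' : (avoidGraph c K).Reachable y y')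
    (hxy : ¬(avoidGraph c K).Reachable x y) : c s(x, y) = c s(x', y') := by
  have hyx' : ¬(avoidGraph c K).Reachable y x' := fun h => hxy (hxx'.trans h.symm)
  calc c s(x, y) = c s(x', y) := color_eq_of_reachable hc hxx' hxy
    _ = c s(y, x') := Sym2.eq_swap ▸ rfl
    _ = c s(y', x') := color_eq_of_reachable hc hyy' hyx'
    _ = c s(x', y') := Sym2.eq_swap ▸ rfl

lemma not_reachable_of_forall_color_mem {v u : V} (hv : ∀ w ≠ v, c s(v, w) ∈ K) (hu : u ≠ v) :
    ¬(avoidGraph c K).Reachable v u := by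
  refine fun h => hu (h.mem_of_adj_closed (S := {v}) ?_ rfl)
  rintro w w' rfl hadj
  exact absurd (hv w' hadj.1.symm) hadj.2

end avoidGraph

section eraseVertex

variable {c : Sym2 V → C} {K : Set C} {v : V}

local notation "G'" => avoidGraph (c ∘ Sym2.map (Subtype.val : {u // u ≠ v} → V)) K

lemma not_reachable_of_forall_reachable_color_mem {z : {u // u ≠ v}}
    (hz : ∀ u, (G').Reachable z u → c s(v, u) ∈ K) : ¬(avoidGraph c K).Reachable z v := by
  intro h
  refine (h.mem_of_adj_closed (S := {w | ∃ hw : w ≠ v, (G').Reachable z ⟨w, hw⟩}) ?_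
    ⟨z.2, .rfl⟩).1 rfl
  rintro u w ⟨hu, hzu⟩ hadj
  have hw : w ≠ v := by
    rintro rfl
    exact hadj.2 (by rw [Sym2.eq_swap]; exact hz _ hzu)
  exact ⟨hw, hzu.trans (SimpleGraph.Adj.reachable ⟨fun h => hadj.1 (congrArg Subtype.val h),
    hadj.2⟩)⟩

lemma color_eq_of_color_not_mem (hc : NoRainbowTriangle c) (hsplit : ¬(G').Preconnected)
    (hcover : ∀ z, ∃ u, (G').Reachable z u ∧ c s(v, u) ∉ K) {u u' : {u // u ≠ v}}
    (hu : c s(v, u) ∉ K) (hu' : c s(v, u') ∉ K) : c s(v, u) = c s(v, u') := by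
  have across : ∀ {u u' : {u // u ≠ v}}, ¬(G').Reachable u u' → c s(v, u) ∉ K →
      c s(v, u') ∉ K → c s(v, u) = c s(v, u') := by
    intro u u' h hu hu'
    have hK : c s(↑u, ↑u') ∈ K :=
      color_mem_of_not_reachable (c := c ∘ Sym2.map Subtype.val) h
    have := hc (a := u) (b := u') (d := v) (fun e => h (Subtype.ext e ▸ .rfl)) u.2 u'.2
      (ne_of_mem_of_not_mem hK (by rwa [Sym2.eq_swap]))
      (ne_of_mem_of_not_mem hK (by rwa [Sym2.eq_swap]))
    rwa [Sym2.eq_swap, Sym2.eq_swap (a := (u' : V))] at this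
  by_cases huu' : (G').Reachable u u'
  · obtain ⟨z, hz⟩ := SimpleGraph.exists_not_reachable_of_not_preconnected hsplit u
    obtain ⟨w, hzw, hw⟩ := hcover z
    have huw : ¬(G').Reachable u w := fun h => hz (h.trans hzw.symm)
    exact (across huw hu hw).trans (across (fun h => huw (huu'.trans h)) hu' hw).symm
  · exact across huu' hu hu'

lemma color_eq_of_color_mem (hc : NoRainbowTriangle c) (hsplit : ¬(G').Preconnected)
    (hcover : ∀ z, ∃ u, (G').Reachable z u ∧ c s(v, u) ∉ K) {u u' : {u // u ≠ v}}
    (hu : c s(v, u) ∈ K) (hu' : c s(v, u') ∈ K) : c s(v, u) = c s(v, u') := by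
  have hc' := hc.comp_map (Subtype.val_injective (p := (· ≠ v)))
  have across : ∀ {u y : {u // u ≠ v}}, c s(v, u) ∈ K → ¬(G').Reachable u y →
      c s(v, u) = c s(↑u, ↑y) := by
    intro u y hu huy
    obtain ⟨w, hyw, hw⟩ := hcover y
    have hwu : ¬(G').Reachable w u := fun h => huy (h.symm.trans hyw.symm)
    have hK : c s(↑w, ↑u) ∈ K :=
      color_mem_of_not_reachable (c := c ∘ Sym2.map Subtype.val) hwu
    calc c s(v, u) = c s(↑w, ↑u) :=
          hc w.2.symm u.2.symm (fun e => hwu (Subtype.ext e ▸ .rfl))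
            (ne_of_mem_of_not_mem hu hw).symm (ne_of_mem_of_not_mem hK hw).symm
      _ = c s(↑y, ↑u) := color_eq_of_reachable hc' hyw.symm hwu
      _ = c s(↑u, ↑y) := by rw [Sym2.eq_swap]
  by_cases huu' : (G').Reachable u u'
  · obtain ⟨z, hz⟩ := SimpleGraph.exists_not_reachable_of_not_preconnected hsplit u
    calc c s(v, u) = c s(↑u, ↑z) := across hu hz
      _ = c s(↑u', ↑z) := color_eq_of_reachable hc' huu' hz
      _ = c s(v, u') := (across hu' fun h => hz (huu'.trans h)).symm
  · calc c s(v, u) = c s(↑u, ↑u') := across hu huu'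
      _ = c s(↑u', ↑u) := by rw [Sym2.eq_swap]
      _ = c s(v, u') := (across hu' fun h => huu' h.symm).symm

lemma exists_pair_forall_color_mem (hc : NoRainbowTriangle c) (hsplit : ¬(G').Preconnected)
    (hcover : ∀ z, ∃ u, (G').Reachable z u ∧ c s(v, u) ∉ K) :
    ∃ g e : C, ∀ u ≠ v, c s(v, u) ∈ ({g, e} : Set C) := by
  obtain ⟨x, -⟩ := not_forall.mp hsplit
  obtain ⟨w, -, hw⟩ := hcover x
  obtain ⟨e, he⟩ : ∃ e, ∀ u : {u // u ≠ v}, c s(v, u) ∈ K → c s(v, u) = e := by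
    by_cases h : ∃ u : {u // u ≠ v}, c s(v, u) ∈ K
    · obtain ⟨u, hu⟩ := h
      exact ⟨_, fun u' hu' => color_eq_of_color_mem hc hsplit hcover hu' hu⟩
    · exact ⟨c s(v, w), fun u hu => (h ⟨u, hu⟩).elim⟩
  refine ⟨c s(v, w), e, fun u hu => ?_⟩
  by_cases huK : c s(v, u) ∈ K
  · exact Or.inr (he ⟨u, hu⟩ huK)
  · exact Or.inl (color_eq_of_color_not_mem hc hsplit hcover (u := ⟨u, hu⟩) huK hw)

end eraseVertex

theorem exists_not_preconnected_of_erase (hc : NoRainbowTriangle c) (v : V) {r b : C}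
    (h : ¬(avoidGraph (c ∘ Sym2.map (Subtype.val : {u // u ≠ v} → V)) {r, b}).Preconnected) :
    ∃ r b : C, ¬(avoidGraph c {r, b}).Preconnected := by
  by_cases hcover : ∃ z : {u // u ≠ v}, ∀ u,
      (avoidGraph (c ∘ Sym2.map Subtype.val) {r, b}).Reachable z u → c s(v, ↑u) ∈ ({r, b} : Set C)
  · obtain ⟨z, hz⟩ := hcover
    exact ⟨r, b, fun hG => not_reachable_of_forall_reachable_color_mem hz (hG _ _)⟩
  · push Not at hcover
    obtain ⟨g, e, hge⟩ := exists_pair_forall_color_mem hc h hcover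
    obtain ⟨x, -⟩ := not_forall.mp h
    exact ⟨g, e, fun hG => not_reachable_of_forall_color_mem hge x.2 (hG _ _)⟩

theorem exists_not_preconnected_avoidGraph {V : Type*} [Fintype V] {c : Sym2 V → C}
    (hc : NoRainbowTriangle c) (hV : 2 ≤ Fintype.card V) :
    ∃ r b : C, ¬(avoidGraph c {r, b}).Preconnected := by
  classical
  obtain ⟨n, hn⟩ : ∃ n, Fintype.card V = n := ⟨_, rfl⟩
  induction n generalizing V with
  | zero => omega
  | succ n ih =>
    obtain ⟨v⟩ : Nonempty V := Fintype.card_pos_iff.mp (by omega)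
    have hW : Fintype.card {u // u ≠ v} = n := by simp [Fintype.card_subtype_compl, hn]
    by_cases hn2 : 2 ≤ n
    · obtain ⟨r, b, h⟩ := ih (hc.comp_map Subtype.val_injective) (hW ▸ hn2) hW
      exact exists_not_preconnected_of_erase hc v h
    · obtain ⟨w, hw⟩ := Fintype.card_eq_one_iff.mp (show Fintype.card {u // u ≠ v} = 1 by omega)
      refine ⟨c s(v, w), c s(v, w), fun hG => ?_⟩
      refine not_reachable_of_forall_color_mem (fun u hu => ?_) w.2 (hG v w)
      rw [show u = w from congrArg Subtype.val (hw ⟨u, hu⟩)]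
      exact Or.inl rfl

end Gallai

open GR in
/-- Gallai's theorem: any rainbow-triangle-free coloring of a complete graph on at least
two vertices admits a nontrivial Gallai partition. -/
theorem gallai_partition {V C : Type} [Fintype V] [DecidableEq V]
    (h2 : 2 ≤ Fintype.card V) (c : Sym2 V → C)
    (hno : ¬ ∃ a b d : V, a ≠ b ∧ a ≠ d ∧ b ≠ d ∧
      c s(a, b) ≠ c s(a, d) ∧ c s(a, b) ≠ c s(b, d) ∧ c s(a, d) ≠ c s(b, d)) :
    ∃ P : Finpartition (Finset.univ : Finset V),
      2 ≤ P.parts.card ∧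
      Set.ncard {col | ∃ p ∈ P.parts, ∃ q ∈ P.parts, p ≠ q ∧
        ∃ x ∈ p, ∃ y ∈ q, c s(x, y) = col} ≤ 2 ∧
      ∀ p ∈ P.parts, ∀ q ∈ P.parts, p ≠ q →
        ∀ x ∈ p, ∀ y ∈ q, ∀ x' ∈ p, ∀ y' ∈ q, c s(x, y) = c s(x', y') := by
  classical
  have hc : Gallai.NoRainbowTriangle c := fun a b d hab had hbd h₁ h₂ => by
    by_contra h₃
    exact hno ⟨a, b, d, hab, had, hbd, h₁, h₂, h₃⟩
  obtain ⟨r, b, hG⟩ := Gallai.exists_not_preconnected_avoidGraph hc h2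
  set G := Gallai.avoidGraph c {r, b}
  set P := Finpartition.ofSetoid G.reachableSetoid
  have not_reachable : ∀ {p q x y}, p ∈ P.parts → q ∈ P.parts → p ≠ q → x ∈ p → y ∈ q →
      ¬G.Reachable x y := fun hp hq hpq hx hy h =>
    hpq (P.eq_of_mem_parts hp hq ((Finpartition.rel_iff_of_mem_ofSetoid hp hx).mpr h) hy)
  refine ⟨P, ?_, ?_, ?_⟩
  · obtain ⟨x, hx⟩ := not_forall.mp hG
    obtain ⟨y, hxy⟩ := not_forall.mp hx
    refine Finset.one_lt_card.mpr ⟨_, P.part_mem.mpr (Finset.mem_univ x), _,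
      P.part_mem.mpr (Finset.mem_univ y), fun h => hxy ?_⟩
    exact Finpartition.mem_part_ofSetoid_iff_rel.mp (h ▸ P.mem_part (Finset.mem_univ y))
  · calc _ ≤ Set.ncard ({r, b} : Set C) := Set.ncard_le_ncard ?_ (Set.toFinite _)
      _ ≤ 2 := (Set.ncard_insert_le _ _).trans (by simp)
    rintro _ ⟨p, hp, q, hq, hpq, x, hx, y, hy, rfl⟩
    exact Gallai.color_mem_of_not_reachable (not_reachable hp hq hpq hx hy)
  · intro p hp q hq hpq x hx y hy x' hx' y' hy'
    exact Gallai.color_eq_of_reachable_of_reachable hc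
      ((Finpartition.rel_iff_of_mem_ofSetoid hp hx).mp hx')
      ((Finpartition.rel_iff_of_mem_ofSetoid hq hy).mp hy') (not_reachable hp hq hpq hx hy)
end

section
/- For k ≥ 4, the Gallai-Ramsey number gr_k(P_5 : H) is at least gr_k(K_{1,3} : H) for every graph H. -/
open SimpleGraph Function

namespace GRAux
open GR

lemma chain {N k : ℕ} (hk : 1 ≤ k) (c : Sym2 (Fin N) → Fin k) :
    ∀ (s : ℕ) (A : Finset (Fin N)), (k+1)^s ≤ A.card →
    ∃ vs : Fin s → Fin N, (∀ i, vs i ∈ A) ∧ Injective vs ∧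
      ∃ cols : Fin s → Fin k, ∀ i j : Fin s, i < j → c s(vs i, vs j) = cols i := by
  intro s
  induction s with
  | zero =>
    intro A _
    exact ⟨Fin.elim0, fun i => i.elim0, fun i => i.elim0, Fin.elim0, fun i => i.elim0⟩
  | succ s ih =>
    intro A hA
    classical
    have hp : 1 ≤ (k+1)^s := Nat.one_le_pow _ _ (by omega)
    obtain ⟨Q, hQ⟩ : ∃ Q, (k+1)^s = Q + 1 := ⟨(k+1)^s - 1, by omega⟩
    have hexp : (k+1)^(s+1) = k*Q + Q + k + 1 := by rw [pow_succ, hQ]; ring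
    obtain ⟨t, ht⟩ : ∃ t, k * Q = t := ⟨_, rfl⟩
    have hA1 : 0 < A.card := by rw [hexp, ht] at hA; omega
    obtain ⟨v, hv⟩ := Finset.card_pos.mp hA1
    obtain ⟨col, -, hcolcard⟩ := Finset.exists_lt_card_fiber_of_mul_lt_card_of_maps_to
      (s := A.erase v) (t := (Finset.univ : Finset (Fin k))) (f := fun u => c s(v, u))
      (n := (k+1)^s - 1) (fun a _ => Finset.mem_univ _) (by
        have hc : (A.erase v).card = A.card - 1 := Finset.card_erase_of_mem hv
        rw [Finset.card_univ, Fintype.card_fin, hc, hQ]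
        simp only [Nat.add_sub_cancel]
        rw [ht]
        rw [hexp, ht] at hA
        omega)
    set B := Finset.filter (fun u => c s(v, u) = col) (A.erase v) with hBdef
    have hBcard : (k+1)^s ≤ B.card := by rw [hQ] at hcolcard ⊢; omega
    obtain ⟨vs', hmem', hinj', cols', hcols'⟩ := ih B hBcard
    have hmemB : ∀ i, vs' i ∈ A.erase v := fun i => Finset.mem_of_mem_filter _ (hmem' i)
    refine ⟨Fin.cons v vs', ?_, ?_, Fin.cons col cols', ?_⟩
    · intro i
      induction i using Fin.cases with
      | zero => simpa using hv
      | succ i => simpa using Finset.mem_of_mem_erase (hmemB i)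
    · intro i j h
      induction i using Fin.cases with
      | zero =>
        induction j using Fin.cases with
        | zero => rfl
        | succ j =>
          rw [Fin.cons_zero, Fin.cons_succ] at h
          exact absurd h.symm (Finset.ne_of_mem_erase (hmemB j))
      | succ i =>
        induction j using Fin.cases with
        | zero =>
          rw [Fin.cons_zero, Fin.cons_succ] at h
          exact absurd h (Finset.ne_of_mem_erase (hmemB i))
        | succ j =>
          rw [Fin.cons_succ, Fin.cons_succ] at h
          exact congrArg Fin.succ (hinj' h)
    · intro i j hij
      induction i using Fin.cases with
      | zero =>
        obtain ⟨j', rfl⟩ := Fin.eq_succ_of_ne_zero (Fin.pos_iff_ne_zero.mp hij)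
        rw [Fin.cons_zero, Fin.cons_succ, Fin.cons_zero]
        exact (Finset.mem_filter.mp (hmem' j')).2
      | succ i =>
        have hjne : j ≠ 0 := by
          intro h; rw [h] at hij; exact absurd hij (by simp [Fin.lt_iff_val_lt_val])
        obtain ⟨j', rfl⟩ := Fin.eq_succ_of_ne_zero hjne
        rw [Fin.cons_succ, Fin.cons_succ, Fin.cons_succ]
        exact hcols' i j' (by rwa [Fin.succ_lt_succ_iff] at hij)

lemma ramsey_clique (k t : ℕ) (hk : 1 ≤ k) :
    ∃ m, ∀ c : Sym2 (Fin m) → Fin k, ∃ g : Fin t → Fin m, Injective g ∧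
      ∃ col : Fin k, ∀ i j, i ≠ j → c s(g i, g j) = col := by
  classical
  rcases Nat.eq_zero_or_pos t with rfl | ht
  · exact ⟨0, fun c => ⟨Fin.elim0, fun i => i.elim0, ⟨0, hk⟩, fun i => i.elim0⟩⟩
  refine ⟨(k+1)^(k*t), fun c => ?_⟩
  obtain ⟨vs, hmem, hinj, cols, hcols⟩ := chain hk c (k*t) Finset.univ
    (by rw [Finset.card_univ, Fintype.card_fin])
  obtain ⟨t', rfl⟩ : ∃ t', t = t' + 1 := ⟨t - 1, by omega⟩
  obtain ⟨col, -, hfib⟩ := Finset.exists_lt_card_fiber_of_mul_lt_card_of_maps_to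
    (s := (Finset.univ : Finset (Fin (k*(t'+1))))) (t := Finset.univ) (f := cols)
    (n := t') (fun a _ => Finset.mem_univ _) (by
      rw [Finset.card_univ, Finset.card_univ, Fintype.card_fin, Fintype.card_fin,
        Nat.mul_succ]
      exact Nat.lt_add_of_pos_right (by omega))
  have hfib' : t' + 1 ≤ (Finset.filter (fun x => cols x = col) Finset.univ).card := hfib
  set F := Finset.filter (fun x => cols x = col) Finset.univ with hF
  have hcolmem : ∀ i : Fin (t'+1), cols (F.orderEmbOfCardLe hfib' i) = col := fun i =>
    (Finset.mem_filter.mp (F.orderEmbOfCardLe_mem hfib' i)).2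
  refine ⟨vs ∘ (F.orderEmbOfCardLe hfib'), hinj.comp (F.orderEmbOfCardLe hfib').injective,
    col, ?_⟩
  intro i j hij
  rcases lt_trichotomy (F.orderEmbOfCardLe hfib' i) (F.orderEmbOfCardLe hfib' j) with h | h | h
  · rw [comp_apply, comp_apply, hcols _ _ h, hcolmem i]
  · exact absurd ((F.orderEmbOfCardLe hfib').injective h) hij
  · rw [comp_apply, comp_apply, Sym2.eq_swap, hcols _ _ h, hcolmem j]

lemma hasRainbow_star {n : ℕ} {C : Type} (c : Sym2 (Fin n) → C) (x a b d : Fin n)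
    (hxa : x ≠ a) (hxb : x ≠ b) (hxd : x ≠ d) (hab : a ≠ b) (had : a ≠ d) (hbd : b ≠ d)
    (h1 : c s(x,a) ≠ c s(x,b)) (h2 : c s(x,a) ≠ c s(x,d)) (h3 : c s(x,b) ≠ c s(x,d)) :
    HasRainbowCopy K13 c := by
  set f : Fin 1 ⊕ Fin 3 → Fin n := Sum.elim (fun _ => x) ![a,b,d] with hf
  have hfinj : Injective f := by
    intro u v h
    fin_cases u <;> fin_cases v <;> simp_all [hf] <;> tauto
  have key : ∀ e ∈ Sym2.map f '' K13.edgeSet, ∃ j : Fin 3, e = s(x, ![a,b,d] j) := by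
    rintro e ⟨e', he', rfl⟩
    induction e' using Sym2.ind with
    | _ u v =>
      rw [SimpleGraph.mem_edgeSet] at he'
      rcases u with u | u <;> rcases v with v | v <;> simp [K13] at he'
      · exact ⟨v, by rw [Sym2.map_pair_eq]; simp [hf]⟩
      · exact ⟨u, by rw [Sym2.map_pair_eq, Sym2.eq_swap]; simp [hf]⟩
  refine ⟨_, ⟨f, hfinj, rfl⟩, ?_⟩
  intro e1 he1 e2 he2 hce
  obtain ⟨j1, rfl⟩ := key e1 he1
  obtain ⟨j2, rfl⟩ := key e2 he2
  fin_cases j1 <;> fin_cases j2 <;> simp_all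

lemma rainbowP5_to_K13 {n : ℕ} {C : Type} (c : Sym2 (Fin n) → C) :
    HasRainbowCopy P5 c → HasRainbowCopy K13 c := by
  rintro ⟨S, ⟨f, hf, rfl⟩, hinj⟩
  have he : ∀ u v : Fin 5, P5.Adj u v → s(f u, f v) ∈ Sym2.map f '' P5.edgeSet :=
    fun u v h => ⟨s(u, v), h, Sym2.map_pair_eq f u v⟩
  have hadj : ∀ u v : Fin 5, ((u:ℕ) + 1 = v ∨ (v:ℕ) + 1 = u) → P5.Adj u v :=
    fun u v h => (pathGraph_adj).mpr h
  have adj01 : P5.Adj 0 1 := hadj 0 1 (by decide)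
  have adj12 : P5.Adj 1 2 := hadj 1 2 (by decide)
  have adj23 : P5.Adj 2 3 := hadj 2 3 (by decide)
  have adj34 : P5.Adj 3 4 := hadj 3 4 (by decide)
  have fne : ∀ {i j : Fin 5}, i ≠ j → f i ≠ f j := fun h hh => h (hf hh)
  have col_ne : ∀ {u v u' v' : Fin 5}, P5.Adj u v → P5.Adj u' v' →
      s(u, v) ≠ s(u', v') → c s(f u, f v) ≠ c s(f u', f v') := by
    intro u v u' v' huv huv' hs hc
    have := hinj (he u v huv) (he u' v' huv') hc
    rw [Sym2.eq_iff] at this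
    apply hs
    rw [Sym2.eq_iff]
    rcases this with ⟨ha, hb⟩ | ⟨ha, hb⟩
    · exact Or.inl ⟨hf ha, hf hb⟩
    · exact Or.inr ⟨hf ha, hf hb⟩
  have d12 : c s(f 0, f 1) ≠ c s(f 1, f 2) := col_ne adj01 adj12 (by decide)
  have d13 : c s(f 0, f 1) ≠ c s(f 2, f 3) := col_ne adj01 adj23 (by decide)
  have d14 : c s(f 0, f 1) ≠ c s(f 3, f 4) := col_ne adj01 adj34 (by decide)
  have d23 : c s(f 1, f 2) ≠ c s(f 2, f 3) := col_ne adj12 adj23 (by decide)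
  have d24 : c s(f 1, f 2) ≠ c s(f 3, f 4) := col_ne adj12 adj34 (by decide)
  have d34 : c s(f 2, f 3) ≠ c s(f 3, f 4) := col_ne adj23 adj34 (by decide)
  by_cases hx1 : c s(f 1, f 3) = c s(f 0, f 1)
  · refine hasRainbow_star c (f 3) (f 1) (f 2) (f 4) (fne (by decide)) (fne (by decide))
      (fne (by decide)) (fne (by decide)) (fne (by decide)) (fne (by decide)) ?_ ?_ ?_
    · rw [show s(f 3, f 1) = s(f 1, f 3) from Sym2.eq_swap,
        show s(f 3, f 2) = s(f 2, f 3) from Sym2.eq_swap, hx1]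
      exact d13
    · rw [show s(f 3, f 1) = s(f 1, f 3) from Sym2.eq_swap, hx1]
      exact d14
    · rw [show s(f 3, f 2) = s(f 2, f 3) from Sym2.eq_swap]
      exact d34
  by_cases hx2 : c s(f 1, f 3) = c s(f 1, f 2)
  · refine hasRainbow_star c (f 3) (f 1) (f 2) (f 4) (fne (by decide)) (fne (by decide))
      (fne (by decide)) (fne (by decide)) (fne (by decide)) (fne (by decide)) ?_ ?_ ?_
    · rw [show s(f 3, f 1) = s(f 1, f 3) from Sym2.eq_swap,
        show s(f 3, f 2) = s(f 2, f 3) from Sym2.eq_swap, hx2]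
      exact d23
    · rw [show s(f 3, f 1) = s(f 1, f 3) from Sym2.eq_swap, hx2]
      exact d24
    · rw [show s(f 3, f 2) = s(f 2, f 3) from Sym2.eq_swap]
      exact d34
  · refine hasRainbow_star c (f 1) (f 0) (f 2) (f 3) (fne (by decide)) (fne (by decide))
      (fne (by decide)) (fne (by decide)) (fne (by decide)) (fne (by decide)) ?_ ?_ ?_
    · rw [show s(f 1, f 0) = s(f 0, f 1) from Sym2.eq_swap]
      exact d12
    · rw [show s(f 1, f 0) = s(f 0, f 1) from Sym2.eq_swap]
      exact fun h => hx1 h.symm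
    · exact fun h => hx2 h.symm

lemma no_rainbow_K13_const {n k : ℕ} (hk : 0 < k) :
    ¬ HasRainbowCopy K13 (fun _ : Sym2 (Fin n) => (⟨0, hk⟩ : Fin k)) := by
  rintro ⟨S, ⟨g, hg, rfl⟩, hinj⟩
  have h0 : s(g (Sum.inl 0), g (Sum.inr 0)) ∈ Sym2.map g '' K13.edgeSet :=
    ⟨s(Sum.inl 0, Sum.inr 0), by simp [K13], Sym2.map_pair_eq g _ _⟩
  have h1 : s(g (Sum.inl 0), g (Sum.inr 1)) ∈ Sym2.map g '' K13.edgeSet :=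
    ⟨s(Sum.inl 0, Sum.inr 1), by simp [K13], Sym2.map_pair_eq g _ _⟩
  have := hinj h0 h1 rfl
  rw [Sym2.eq_iff] at this
  rcases this with ⟨ha, hb⟩ | ⟨ha, hb⟩
  · exact absurd (hg hb) (by decide)
  · exact absurd (hg ha) (by decide)

end GRAux

open GR in
/-- For `k ≥ 4`, `gr_k(P₅ : H) ≥ gr_k(K_{1,3} : H)` for every graph `H`. -/
theorem gr_P5_ge_gr_K13 {β : Type} (k : ℕ) (hk : 4 ≤ k) (H : SimpleGraph β) :
    gr k K13 H ≤ gr k P5 H := by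
  classical
  by_cases hB : {n | ∀ c : Sym2 (Fin n) → Fin k, HasRainbowCopy P5 c ∨ HasMonoCopy H c}.Nonempty
  · have hmem := Nat.sInf_mem hB
    have hin : sInf {n | ∀ c : Sym2 (Fin n) → Fin k, HasRainbowCopy P5 c ∨ HasMonoCopy H c} ∈
        {n | ∀ c : Sym2 (Fin n) → Fin k, HasRainbowCopy K13 c ∨ HasMonoCopy H c} :=
      fun c => (hmem c).imp (GRAux.rainbowP5_to_K13 c) id
    exact Nat.sInf_le hin
  · have hA : {n | ∀ c : Sym2 (Fin n) → Fin k, HasRainbowCopy K13 c ∨ HasMonoCopy H c} = ∅ := by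
      rw [Set.eq_empty_iff_forall_notMem]
      intro n hn
      rcases hn (fun _ => (⟨0, by omega⟩ : Fin k)) with hr | hm
      · exact GRAux.no_rainbow_K13_const (by omega) hr
      · obtain ⟨S, ⟨f0, hf0, rfl⟩, -⟩ := hm
        obtain ⟨m, hmram⟩ := GRAux.ramsey_clique k n (by omega)
        apply hB
        refine ⟨m, fun c => Or.inr ?_⟩
        obtain ⟨g, hg, col, hcol⟩ := hmram c
        refine ⟨Sym2.map (g ∘ f0) '' H.edgeSet, ⟨g ∘ f0, hg.comp hf0, rfl⟩, col, ?_⟩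
        rintro e ⟨e', he', rfl⟩
        induction e' using Sym2.ind with
        | _ x y =>
          rw [Sym2.map_pair_eq]
          exact hcol _ _ (fun hxy => (H.ne_of_adj he') (hf0 hxy))
    unfold gr
    rw [hA, Set.not_nonempty_iff_eq_empty.mp hB, Nat.sInf_empty]
end

section
/- For positive integers n_1 ≥ n_2 ≥ ... ≥ n_k, the k-colored Ramsey number of the matchings n_1K_2, ..., n_kK_2 equals n_1 + 1 + Σ_{i=1}^{k} (n_i − 1). -/
open SimpleGraph Function

/-!
Write `νᵢ(W)` for the largest size of a matching of colour `i` inside the vertex set `W`. The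
upper bound comes from the inequality `|W| ≤ ∑ᵢ νᵢ(W) + maxᵢ νᵢ(W) + 1`, proved by induction on
`W`. Take any edge `xy`, of colour `c₀` say. If deleting `x`, `y` or `{x, y}` lowers `∑ᵢ νᵢ` by as
much as it lowers `|W|`, induction applies. Otherwise count the `2 |W \ {x, y}|` edges from
`{x, y}` to the other vertices colour by colour: a maximum matching of colour `i ≠ c₀` avoiding `x`
and `y` must cover their `i`-neighbours and receives at most two such edges per matching edge
(three would allow an exchange), so there are at most `2 νᵢ(W)` of them, and there are at most
`2 (2 ν_{c₀}(W) - 1)` edges of colour `c₀`.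

For the lower bound, split `n₁ + ∑ᵢ (nᵢ - 1)` vertices into blocks of sizes `2 n₁ - 1` and
`nᵢ - 1` (`i ≥ 2`), labelled by the colours, and give each edge the larger label of its ends.
Every edge of colour `i ≥ 2` meets block `i`, and every edge of colour `1` lies in block `1`.
-/

namespace CockayneLorimer

open Finset

section Matching

variable {V : Type*} [DecidableEq V]

def ends (p : V × V) : Finset V := {p.1, p.2}

def verts (M : Finset (V × V)) : Finset V := M.biUnion ends

@[simp] lemma mem_ends {p : V × V} {v : V} : v ∈ ends p ↔ v = p.1 ∨ v = p.2 := by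
  simp [ends]

lemma mem_verts {M : Finset (V × V)} {v : V} : v ∈ verts M ↔ ∃ p ∈ M, v ∈ ends p :=
  mem_biUnion

lemma fst_mem_verts {M : Finset (V × V)} {p : V × V} (hp : p ∈ M) : p.1 ∈ verts M :=
  mem_verts.2 ⟨p, hp, by simp⟩

lemma snd_mem_verts {M : Finset (V × V)} {p : V × V} (hp : p ∈ M) : p.2 ∈ verts M :=
  mem_verts.2 ⟨p, hp, by simp⟩

lemma notMem_of_fst_notMem_verts {M : Finset (V × V)} {p : V × V} (h : p.1 ∉ verts M) :
    p ∉ M :=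
  fun hp => h (fst_mem_verts hp)

lemma verts_insert (p : V × V) (M : Finset (V × V)) : verts (insert p M) = ends p ∪ verts M :=
  biUnion_insert

lemma verts_mono {M M' : Finset (V × V)} (h : M' ⊆ M) : verts M' ⊆ verts M :=
  biUnion_subset_biUnion_of_subset_left _ h

structure IsPairMatching (G : SimpleGraph V) (M : Finset (V × V)) : Prop where
  adj : ∀ p ∈ M, G.Adj p.1 p.2
  pairwiseDisjoint : (M : Set (V × V)).PairwiseDisjoint ends

variable {G : SimpleGraph V} {M : Finset (V × V)}

namespace IsPairMatching

lemma empty : IsPairMatching G ∅ := ⟨by simp, by simp⟩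

lemma subset (hM : IsPairMatching G M) {M' : Finset (V × V)} (h : M' ⊆ M) :
    IsPairMatching G M' :=
  ⟨fun p hp => hM.adj p (h hp), hM.pairwiseDisjoint.subset (coe_subset.2 h)⟩

lemma card_verts (hM : IsPairMatching G M) : #(verts M) = 2 * #M := by
  have hends : ∀ p ∈ M, #(ends p) = 2 := fun p hp => card_pair (hM.adj p hp).ne
  rw [verts, card_biUnion hM.pairwiseDisjoint, sum_congr rfl hends, sum_const, smul_eq_mul,
    mul_comm]

lemma insert (hM : IsPairMatching G M) {x y : V} (hxy : G.Adj x y) (hx : x ∉ verts M)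
    (hy : y ∉ verts M) : IsPairMatching G (insert (x, y) M) := by
  refine ⟨?_, ?_⟩
  · simpa [forall_eq_or_imp] using ⟨hxy, fun a b => hM.adj (a, b)⟩
  · rw [coe_insert]
    refine hM.pairwiseDisjoint.insert fun q hq _ => disjoint_left.2 fun v hv hvq => ?_
    rcases mem_ends.1 hv with rfl | rfl
    exacts [hx (mem_verts.2 ⟨q, hq, hvq⟩), hy (mem_verts.2 ⟨q, hq, hvq⟩)]

lemma notMem_verts_erase (hM : IsPairMatching G M) {p : V × V} (hp : p ∈ M) {v : V}
    (hv : v ∈ ends p) : v ∉ verts (M.erase p) := by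
  rw [mem_verts]
  rintro ⟨q, hq, hvq⟩
  exact disjoint_left.1 (hM.pairwiseDisjoint hp (mem_of_mem_erase hq) (ne_of_mem_erase hq).symm)
    hv hvq

end IsPairMatching

variable (G) in
open Classical in
noncomputable def matchingNumber (W : Finset V) : ℕ :=
  ((W ×ˢ W).powerset.filter (IsPairMatching G)).sup card

lemma IsPairMatching.card_le_matchingNumber (hM : IsPairMatching G M) {W : Finset V}
    (hW : verts M ⊆ W) : #M ≤ matchingNumber G W := by
  classical
  refine le_sup (f := card) (mem_filter.2 ⟨mem_powerset.2 fun p hp => ?_, hM⟩)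
  exact mem_product.2 ⟨hW (fst_mem_verts hp), hW (snd_mem_verts hp)⟩

variable (G) in
lemma exists_isPairMatching_card_eq (W : Finset V) :
    ∃ M, IsPairMatching G M ∧ verts M ⊆ W ∧ #M = matchingNumber G W := by
  classical
  obtain ⟨M, hM, hcard⟩ := exists_mem_eq_sup ((W ×ˢ W).powerset.filter (IsPairMatching G))
    ⟨∅, mem_filter.2 ⟨empty_mem_powerset _, .empty⟩⟩ card
  obtain ⟨hMW, hM⟩ := mem_filter.1 hM
  refine ⟨M, hM, fun v hv => ?_, hcard.symm⟩
  obtain ⟨p, hp, hvp⟩ := mem_verts.1 hv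
  have := mem_product.1 (mem_powerset.1 hMW hp)
  rcases mem_ends.1 hvp with rfl | rfl
  exacts [this.1, this.2]

lemma matchingNumber_mono {W W' : Finset V} (h : W ⊆ W') :
    matchingNumber G W ≤ matchingNumber G W' := by
  obtain ⟨M, hM, hMW, hcard⟩ := exists_isPairMatching_card_eq G W
  exact hcard ▸ hM.card_le_matchingNumber (hMW.trans h)

lemma IsPairMatching.card_lt_matchingNumber_of_adj (hM : IsPairMatching G M) {W : Finset V}
    (hMW : verts M ⊆ W) {x y : V} (hx : x ∈ W) (hy : y ∈ W) (hxM : x ∉ verts M)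
    (hyM : y ∉ verts M) (hxy : G.Adj x y) : #M < matchingNumber G W := by
  have hle := (hM.insert hxy hxM hyM).card_le_matchingNumber (W := W) <| by
    rw [verts_insert]
    exact union_subset (by simp [ends, insert_subset_iff, hx, hy]) hMW
  rwa [card_insert_of_notMem (notMem_of_fst_notMem_verts hxM), Nat.add_one_le_iff] at hle

/-- Exchanging an edge `ab` of `M` for `xa` and `yb`. -/
lemma card_lt_matchingNumber_of_exchange (hM : IsPairMatching G M)
    {W : Finset V} (hMW : verts M ⊆ W) {a b x y : V} (hab : (a, b) ∈ M) (hx : x ∈ W) (hy : y ∈ W)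
    (hxM : x ∉ verts M) (hyM : y ∉ verts M) (hxy : x ≠ y) (hxa : G.Adj x a) (hyb : G.Adj y b) :
    #M < matchingNumber G W := by
  have hE : verts (M.erase (a, b)) ⊆ verts M := verts_mono (erase_subset _ _)
  have hyE : y ∉ verts (M.erase (a, b)) := fun h => hyM (hE h)
  have ha : a ∈ verts M := fst_mem_verts hab
  have hb : b ∈ verts M := snd_mem_verts hab
  have hM₁ := (hM.subset (erase_subset (a, b) M)).insert hyb hyE
    (hM.notMem_verts_erase hab (v := b) (by simp))
  have hM₁W : verts (insert (y, b) (M.erase (a, b))) ⊆ W := by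
    rw [verts_insert]
    exact union_subset (by simp [ends, insert_subset_iff, hy, hMW hb]) (hE.trans hMW)
  have hxM₁ : x ∉ verts (insert (y, b) (M.erase (a, b))) := by
    have hxb : x ≠ b := fun h => hxM (h ▸ hb)
    rw [verts_insert, mem_union, not_or]
    exact ⟨by simp [hxy, hxb], fun h => hxM (hE h)⟩
  have haM₁ : a ∉ verts (insert (y, b) (M.erase (a, b))) := by
    have hay : a ≠ y := fun h => hyM (h ▸ ha)
    rw [verts_insert, mem_union, not_or]
    exact ⟨by simp [hay, (hM.adj _ hab).ne], hM.notMem_verts_erase hab (by simp)⟩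
  have hlt := hM₁.card_lt_matchingNumber_of_adj hM₁W hx (hMW ha) hxM₁ haM₁ hxa
  rwa [card_insert_of_notMem (notMem_of_fst_notMem_verts hyE), card_erase_add_one hab] at hlt

lemma matchingNumber_sdiff_pair_lt {W : Finset V} {x y : V} (hx : x ∈ W) (hy : y ∈ W)
    (hxy : G.Adj x y) : matchingNumber G (W \ {x, y}) < matchingNumber G W := by
  obtain ⟨M, hM, hMW, hcard⟩ := exists_isPairMatching_card_eq G (W \ {x, y})
  exact hcard ▸ hM.card_lt_matchingNumber_of_adj (hMW.trans sdiff_subset) hx hy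
    (fun h => by simpa using hMW h) (fun h => by simpa using hMW h) hxy

/-- A maximum matching avoiding `x` covers every neighbour of `x`, unless it can be enlarged. -/
lemma card_filter_adj_le [DecidableRel G.Adj] {W : Finset V} {x : V} (hx : x ∈ W)
    (h : matchingNumber G W ≤ matchingNumber G (W.erase x)) :
    #(W.filter (G.Adj x)) ≤ 2 * matchingNumber G W := by
  obtain ⟨M, hM, hMx, hcard⟩ := exists_isPairMatching_card_eq G (W.erase x)
  have hcard' : #M = matchingNumber G W :=
    hcard.trans (le_antisymm (matchingNumber_mono (erase_subset x W)) h)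
  have hMW : verts M ⊆ W := hMx.trans (erase_subset x W)
  have hxM : x ∉ verts M := fun h => by simpa using hMx h
  have hcover : W.filter (G.Adj x) ⊆ verts M := fun z hz => by
    obtain ⟨hzW, hxz⟩ := mem_filter.1 hz
    by_contra hzM
    exact (hM.card_lt_matchingNumber_of_adj hMW hx hzW hxM hzM hxz).ne hcard'
  calc #(W.filter (G.Adj x)) ≤ #(verts M) := card_le_card hcover
    _ = 2 * matchingNumber G W := by rw [hM.card_verts, hcard']

lemma card_filter_adj_add_card_filter_adj_le [DecidableRel G.Adj] {W : Finset V} {x y : V}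
    (hx : x ∈ W) (hy : y ∈ W) (hxy : x ≠ y)
    (h : matchingNumber G W ≤ matchingNumber G (W \ {x, y})) :
    #((W \ {x, y}).filter (G.Adj x)) + #((W \ {x, y}).filter (G.Adj y)) ≤
      2 * matchingNumber G W := by
  set T := W \ {x, y}
  obtain ⟨M, hM, hMT, hcard⟩ := exists_isPairMatching_card_eq G T
  have hcard' : #M = matchingNumber G W :=
    hcard.trans (le_antisymm (matchingNumber_mono sdiff_subset) h)
  have hxM : x ∉ verts M := fun h => by simpa [T] using hMT h
  have hyM : y ∉ verts M := fun h => by simpa [T] using hMT h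
  have hMW : verts M ⊆ W := hMT.trans sdiff_subset
  let w : V → ℕ := fun z => (if G.Adj x z then 1 else 0) + (if G.Adj y z then 1 else 0)
  have hcover : ∀ z ∈ T, w z ≠ 0 → z ∈ verts M := by
    intro z hzT hz
    by_contra hzM
    have augment : ∀ u ∈ W, u ∉ verts M → ¬ G.Adj u z := fun u hu huM huz =>
      (hM.card_lt_matchingNumber_of_adj hMW hu (sdiff_subset hzT) huM hzM huz).ne hcard'
    simp [w, augment x hx hxM, augment y hy hyM] at hz
  have hedge : ∀ p ∈ M, ∑ z ∈ ends p, w z ≤ 2 := by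
    rintro ⟨a, b⟩ hab
    have h₁ : ¬ (G.Adj x a ∧ G.Adj y b) := fun ⟨hxa, hyb⟩ =>
      (card_lt_matchingNumber_of_exchange hM hMW hab hx hy hxM hyM hxy hxa hyb).ne hcard'
    have h₂ : ¬ (G.Adj y a ∧ G.Adj x b) := fun ⟨hya, hxb⟩ =>
      (card_lt_matchingNumber_of_exchange hM hMW hab hy hx hyM hxM hxy.symm hya hxb).ne hcard'
    rw [ends, sum_pair (hM.adj _ hab).ne]
    simp only [w]
    split_ifs <;> simp_all
  calc #(T.filter (G.Adj x)) + #(T.filter (G.Adj y)) = ∑ z ∈ T, w z := by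
        simp only [w, sum_add_distrib, card_filter]
    _ ≤ ∑ z ∈ verts M, w z := sum_le_sum_of_ne_zero hcover
    _ = ∑ p ∈ M, ∑ z ∈ ends p, w z := sum_biUnion hM.pairwiseDisjoint
    _ ≤ ∑ p ∈ M, 2 := sum_le_sum hedge
    _ = 2 * matchingNumber G W := by rw [sum_const, smul_eq_mul, hcard', mul_comm]

lemma matchingNumber_le_card_of_forall_adj {B : Finset V}
    (hB : ∀ u v, G.Adj u v → u ∈ B ∨ v ∈ B) (W : Finset V) : matchingNumber G W ≤ #B := by
  obtain ⟨M, hM, -, hcard⟩ := exists_isPairMatching_card_eq G W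
  have hmeet : ∀ p ∈ M, 1 ≤ #(ends p ∩ B) := fun p hp => by
    rw [Nat.one_le_iff_ne_zero, Ne, card_eq_zero, ← not_nonempty_iff_eq_empty, not_not]
    rcases hB _ _ (hM.adj p hp) with h | h
    exacts [⟨p.1, by simp [h]⟩, ⟨p.2, by simp [h]⟩]
  calc matchingNumber G W = ∑ p ∈ M, 1 := by simp [hcard]
    _ ≤ ∑ p ∈ M, #(ends p ∩ B) := sum_le_sum hmeet
    _ = #(M.biUnion fun p => ends p ∩ B) :=
      (card_biUnion (hM.pairwiseDisjoint.mono fun _ => inter_subset_left)).symm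
    _ ≤ #B := card_le_card (biUnion_subset.2 fun _ _ => inter_subset_right)

lemma two_mul_matchingNumber_le_card_of_forall_adj {B : Finset V}
    (hB : ∀ u v, G.Adj u v → u ∈ B) (W : Finset V) : 2 * matchingNumber G W ≤ #B := by
  obtain ⟨M, hM, -, hcard⟩ := exists_isPairMatching_card_eq G W
  have hMB : verts M ⊆ B := fun v hv => by
    obtain ⟨p, hp, hvp⟩ := mem_verts.1 hv
    rcases mem_ends.1 hvp with rfl | rfl
    exacts [hB _ _ (hM.adj p hp), hB _ _ (hM.adj p hp).symm]
  rw [← hcard, ← hM.card_verts]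
  exact card_le_card hMB

lemma le_matchingNumber_univ_iff [Fintype V] {n : ℕ} :
    n ≤ matchingNumber G univ ↔
      ∃ f : Fin n × Fin 2 → V, Function.Injective f ∧ ∀ j, G.Adj (f (j, 0)) (f (j, 1)) := by
  constructor
  · intro hn
    obtain ⟨M, hM, -, hcard⟩ := exists_isPairMatching_card_eq G univ
    let e : Fin n → M := fun j => M.equivFin.symm (Fin.castLE (hcard ▸ hn) j)
    have he : Function.Injective e := M.equivFin.symm.injective.comp (Fin.castLE_injective _)
    refine ⟨fun q => ![(e q.1).1.1, (e q.1).1.2] q.2, ?_, fun j => hM.adj _ (e j).2⟩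
    rintro ⟨j, s⟩ ⟨j', t⟩ hjt
    have hjt' : ![(e j).1.1, (e j).1.2] s = ![(e j').1.1, (e j').1.2] t := hjt
    have hends : ∀ j s, ![(e j).1.1, (e j).1.2] s ∈ ends (e j).1 := fun j s => by
      fin_cases s <;> simp
    obtain rfl : j = j' := by
      by_contra hne
      exact disjoint_left.1 (hM.pairwiseDisjoint (e j).2 (e j').2 fun h => hne (he (Subtype.ext h)))
        (hends j s) (hjt' ▸ hends j' t)
    have hne := (hM.adj _ (e j).2).ne
    fin_cases s <;> fin_cases t <;> simp_all [eq_comm]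
  · rintro ⟨f, hf, hadj⟩
    let g : Fin n → V × V := fun j => (f (j, 0), f (j, 1))
    have hg : Function.Injective g := fun j j' h => by
      simpa using hf (Prod.ext_iff.1 h).1
    have hM : IsPairMatching G (univ.image g) := by
      refine ⟨by simpa [g] using hadj, ?_⟩
      simp only [coe_image, coe_univ, Set.image_univ]
      rintro _ ⟨j, rfl⟩ _ ⟨j', rfl⟩ hne
      refine disjoint_left.2 fun v hv hv' => hne ?_
      simp only [g, mem_ends] at hv hv'
      have key : ∀ s t : Fin 2, f (j, s) = f (j', t) → g j = g j' := fun s t h => by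
        rw [show j = j' from (Prod.ext_iff.1 (hf h)).1]
      rcases hv with rfl | rfl <;> rcases hv' with h | h
      exacts [key 0 0 h, key 0 1 h, key 1 0 h, key 1 1 h]
    simpa [card_image_of_injective _ hg] using hM.card_le_matchingNumber (subset_univ _)

end Matching

section Coloring

variable {V C : Type*}

def colorGraph (c : Sym2 V → C) (i : C) : SimpleGraph V := SimpleGraph.fromEdgeSet {e | c e = i}

@[simp] lemma colorGraph_adj {c : Sym2 V → C} {i : C} {u v : V} :
    (colorGraph c i).Adj u v ↔ c s(u, v) = i ∧ u ≠ v :=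
  SimpleGraph.fromEdgeSet_adj _

variable [DecidableEq V]

instance [DecidableEq C] (c : Sym2 V → C) (i : C) : DecidableRel (colorGraph c i).Adj :=
  fun _ _ => decidable_of_iff' _ colorGraph_adj

lemma sum_matchingNumber_lt_sum (c : Sym2 V → C) {W' W : Finset V} (hW : W' ⊆ W) {s : Finset C}
    {d : C} (hd : d ∈ s)
    (hlt : matchingNumber (colorGraph c d) W' < matchingNumber (colorGraph c d) W) :
    ∑ i ∈ s, matchingNumber (colorGraph c i) W' < ∑ i ∈ s, matchingNumber (colorGraph c i) W :=
  sum_lt_sum (fun _ _ => matchingNumber_mono hW) ⟨d, hd, hlt⟩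

variable [Fintype C] [DecidableEq C] (c : Sym2 V → C)

lemma sum_card_filter_colorGraph_adj {T : Finset V} {u : V} (hu : u ∉ T) :
    ∑ i, #(T.filter fun z => (colorGraph c i).Adj u z) = #T := by
  rw [card_eq_sum_card_fiberwise (f := fun z => c s(u, z)) (t := univ) fun _ _ => mem_univ _]
  refine sum_congr rfl fun i _ => congrArg card (filter_congr fun z hz => ?_)
  have huz : u ≠ z := fun h => hu (h ▸ hz)
  simp [eq_comm, huz]

lemma card_le_sum_matchingNumber_of_stable {W : Finset V} {x y : V} (hx : x ∈ W) (hy : y ∈ W)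
    (hxy : x ≠ y) {c₀ : C} (hc₀ : c s(x, y) = c₀)
    (hx₀ : matchingNumber (colorGraph c c₀) W ≤ matchingNumber (colorGraph c c₀) (W.erase x))
    (hy₀ : matchingNumber (colorGraph c c₀) W ≤ matchingNumber (colorGraph c c₀) (W.erase y))
    (hd : ∀ d ≠ c₀,
      matchingNumber (colorGraph c d) W ≤ matchingNumber (colorGraph c d) (W \ {x, y})) :
    #W ≤ ∑ i, matchingNumber (colorGraph c i) W + matchingNumber (colorGraph c c₀) W + 1 := by
  set T := W \ {x, y}
  set ν : C → ℕ := fun i => matchingNumber (colorGraph c i) W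
  set X : C → Finset V := fun i => T.filter fun z => (colorGraph c i).Adj x z
  set Y : C → Finset V := fun i => T.filter fun z => (colorGraph c i).Adj y z
  have hxT : x ∉ T := by simp [T]
  have hyT : y ∉ T := by simp [T]
  have hTW : T ⊆ W := sdiff_subset
  have hcardT : #T + 2 = #W := by
    rw [← card_pair hxy]
    exact card_sdiff_add_card_eq_card (by simp [insert_subset_iff, hx, hy])
  have hdeg : ∀ u v, u ∈ W → v ∈ W → v ∉ T → (colorGraph c c₀).Adj u v →
      ν c₀ ≤ matchingNumber (colorGraph c c₀) (W.erase u) →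
      #(T.filter fun z => (colorGraph c c₀).Adj u z) + 1 ≤ 2 * ν c₀ := by
    intro u v hu hv hvT huv hu₀
    refine le_trans (card_lt_card ?_) (card_filter_adj_le hu hu₀)
    exact (ssubset_iff_of_subset (filter_subset_filter _ hTW)).2
      ⟨v, mem_filter.2 ⟨hv, huv⟩, by simp [hvT]⟩
  have hX₀ : #(X c₀) + 1 ≤ 2 * ν c₀ := hdeg x y hx hy hyT (by simp [hc₀, hxy]) hx₀
  have hY₀ : #(Y c₀) + 1 ≤ 2 * ν c₀ :=
    hdeg y x hy hx hxT (by simp [Sym2.eq_swap, hc₀, hxy.symm]) hy₀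
  have hXY : ∀ d ∈ univ.erase c₀, #(X d) + #(Y d) ≤ 2 * ν d := fun d hd' =>
    card_filter_adj_add_card_filter_adj_le hx hy hxy (hd d (ne_of_mem_erase hd'))
  have hsplit : ∀ f : C → ℕ, ∑ i, f i = f c₀ + ∑ i ∈ univ.erase c₀, f i :=
    fun f => (add_sum_erase _ _ (mem_univ _)).symm
  have hcount : 2 * #T ≤ 4 * ν c₀ - 2 + 2 * ∑ i ∈ univ.erase c₀, ν i :=
    calc 2 * #T = ∑ i, (#(X i) + #(Y i)) := by
          rw [sum_add_distrib]
          simp only [X, Y]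
          rw [sum_card_filter_colorGraph_adj c hxT,
            sum_card_filter_colorGraph_adj c hyT, two_mul]
      _ = #(X c₀) + #(Y c₀) + ∑ i ∈ univ.erase c₀, (#(X i) + #(Y i)) := hsplit _
      _ ≤ 4 * ν c₀ - 2 + ∑ i ∈ univ.erase c₀, 2 * ν i := add_le_add (by omega) (sum_le_sum hXY)
      _ = 4 * ν c₀ - 2 + 2 * ∑ i ∈ univ.erase c₀, ν i := by rw [mul_sum]
  have := hsplit ν
  simp only [ν] at this hcount hX₀ ⊢
  omega

theorem card_le_sum_matchingNumber_add_sup (W : Finset V) :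
    #W ≤ ∑ i, matchingNumber (colorGraph c i) W +
      univ.sup (fun i => matchingNumber (colorGraph c i) W) + 1 := by
  induction W using Finset.strongInduction with | H W ih => ?_
  rcases le_or_gt #W 1 with hW | hW
  · omega
  obtain ⟨x, hx, y, hy, hxy⟩ := one_lt_card.1 hW
  set c₀ := c s(x, y)
  have hsup := le_sup (f := fun i => matchingNumber (colorGraph c i) W) (mem_univ c₀)
  have reduce : ∀ W' ⊂ W, #W + ∑ i, matchingNumber (colorGraph c i) W' ≤
      #W' + ∑ i, matchingNumber (colorGraph c i) W → #W ≤ ∑ i, matchingNumber (colorGraph c i) W +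
        univ.sup (fun i => matchingNumber (colorGraph c i) W) + 1 := fun W' hW' h => by
    have h₁ := ih W' hW'
    have h₂ := sup_mono_fun fun i (_ : i ∈ univ) => matchingNumber_mono (G := colorGraph c i) hW'.1
    omega
  by_cases hx₀ : matchingNumber (colorGraph c c₀) (W.erase x) < matchingNumber (colorGraph c c₀) W
  · refine reduce _ (erase_ssubset hx) ?_
    have := sum_matchingNumber_lt_sum c (erase_subset x W) (mem_univ _) hx₀
    have := card_erase_add_one hx
    omega
  by_cases hy₀ : matchingNumber (colorGraph c c₀) (W.erase y) < matchingNumber (colorGraph c c₀) W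
  · refine reduce _ (erase_ssubset hy) ?_
    have := sum_matchingNumber_lt_sum c (erase_subset y W) (mem_univ _) hy₀
    have := card_erase_add_one hy
    omega
  by_cases hd : ∃ d ≠ c₀,
      matchingNumber (colorGraph c d) (W \ {x, y}) < matchingNumber (colorGraph c d) W
  · obtain ⟨d, hdc₀, hd⟩ := hd
    have hxyW : {x, y} ⊆ W := by simp [insert_subset_iff, hx, hy]
    refine reduce _ (sdiff_ssubset hxyW (by simp)) ?_
    have h₀ := matchingNumber_sdiff_pair_lt (G := colorGraph c c₀) hx hy
      (colorGraph_adj.2 ⟨rfl, hxy⟩)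
    have h₁ := sum_matchingNumber_lt_sum c sdiff_subset (mem_erase.2 ⟨hdc₀, mem_univ _⟩) hd
    have h₂ := card_sdiff_add_card_eq_card hxyW
    rw [card_pair hxy] at h₂
    rw [← add_sum_erase _ _ (mem_univ c₀), ← add_sum_erase _ _ (mem_univ c₀)]
    omega
  push Not at hx₀ hy₀ hd
  have := card_le_sum_matchingNumber_of_stable c hx hy hxy (c₀ := c₀) rfl hx₀ hy₀ hd
  omega

theorem exists_le_matchingNumber_of_sup_add_sum_lt [Fintype V] [Nonempty C] (n : C → ℕ)
    (h : univ.sup n + ∑ i, (n i - 1) < Fintype.card V) :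
    ∃ i, n i ≤ matchingNumber (colorGraph c i) univ := by
  by_contra! hlt
  have hS := card_le_sum_matchingNumber_add_sup c (univ : Finset V)
  have hsum : ∑ i, matchingNumber (colorGraph c i) univ ≤ ∑ i, (n i - 1) :=
    sum_le_sum fun i _ => Nat.le_sub_one_of_lt (hlt i)
  have hsup : univ.sup (fun i => matchingNumber (colorGraph c i) univ) ≤ univ.sup n - 1 :=
    Finset.sup_le fun i _ =>
      (Nat.le_sub_one_of_lt (hlt i)).trans (Nat.sub_le_sub_right (le_sup (mem_univ i)) 1)
  have hpos : 0 < univ.sup n :=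
    ((Nat.zero_le _).trans_lt (hlt (Classical.arbitrary C))).trans_le (le_sup (mem_univ _))
  rw [card_univ] at hS
  omega

end Coloring

section BlockColoring

variable {V C : Type*}

lemma exists_forall_card_fiber_le [Fintype V] [Fintype C] [DecidableEq C] (cap : C → ℕ)
    (h : Fintype.card V ≤ ∑ i, cap i) :
    ∃ b : V → C, ∀ i, #(univ.filter fun v => b v = i) ≤ cap i := by
  obtain ⟨g⟩ : Nonempty (V ↪ Σ i, Fin (cap i)) :=
    Function.Embedding.nonempty_of_card_le (by simpa using h)
  refine ⟨fun v => (g v).1, fun i => ?_⟩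
  calc #(univ.filter fun v => (g v).1 = i) ≤ #(({i} : Finset C).sigma fun _ => univ) :=
        card_le_card_of_injOn g (fun v hv => by simpa using hv) g.injective.injOn
    _ = cap i := by simp

def maxColoring [LinearOrder C] (b : V → C) : Sym2 V → C :=
  Sym2.lift ⟨fun u v => max (b u) (b v), fun _ _ => max_comm _ _⟩

theorem exists_coloring_matchingNumber_lt [DecidableEq V] [Fintype V] [Fintype C] [LinearOrder C]
    {i₀ : C} (hi₀ : ∀ i, i₀ ≤ i) (n : C → ℕ) (hn : ∀ i, 0 < n i)
    (h : Fintype.card V ≤ n i₀ + ∑ i, (n i - 1)) :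
    ∃ c : Sym2 V → C, ∀ i, matchingNumber (colorGraph c i) univ < n i := by
  obtain ⟨b, hb⟩ := exists_forall_card_fiber_le (fun i => n i - 1 + if i = i₀ then n i₀ else 0)
    (by rw [sum_add_distrib, sum_ite_eq']; simpa [add_comm] using h)
  refine ⟨maxColoring b, fun i => ?_⟩
  have hadj : ∀ u v, (colorGraph (maxColoring b) i).Adj u v → max (b u) (b v) = i :=
    fun u v huv => (colorGraph_adj.1 huv).1
  have hbi := hb i
  have hni := hn i
  by_cases hi : i = i₀
  · subst hi
    have := two_mul_matchingNumber_le_card_of_forall_adj (B := univ.filter fun v => b v = i)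
      (fun u v huv => by simpa using le_antisymm ((hadj u v huv) ▸ le_max_left _ _) (hi₀ _))
      univ
    simp only [if_true] at hbi
    omega
  · have := matchingNumber_le_card_of_forall_adj (G := colorGraph (maxColoring b) i)
      (B := univ.filter fun v => b v = i) (fun u v huv => by
        rcases max_choice (b u) (b v) with h | h <;> simp [← hadj u v huv, h]) univ
    simp only [hi, if_false] at hbi
    omega

end BlockColoring

section Copies

open GR

lemma edgeSet_nK2 (n : ℕ) : (nK2 n).edgeSet = Set.range fun j => s((j, 0), (j, 1)) := by
  ext e
  induction e using Sym2.ind with | _ a b => ?_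
  obtain ⟨j, s⟩ := a
  obtain ⟨j', t⟩ := b
  simp only [nK2, SimpleGraph.mem_edgeSet, SimpleGraph.fromRel_adj, Set.mem_range]
  fin_cases s <;> fin_cases t <;> simp [eq_comm]

lemma exists_mem_copies_nK2_iff {C : Type*} [DecidableEq C] {r : ℕ} (c : Sym2 (Fin r) → C)
    (i : C) (n : ℕ) : (∃ S ∈ copies (nK2 n) r, ∀ e ∈ S, c e = i) ↔
      n ≤ matchingNumber (colorGraph c i) univ := by
  rw [le_matchingNumber_univ_iff]
  constructor
  · rintro ⟨_, ⟨f, hf, rfl⟩, hS⟩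
    refine ⟨f, hf, fun j => colorGraph_adj.2 ⟨?_, hf.ne (by simp)⟩⟩
    exact hS _ ⟨_, edgeSet_nK2 n ▸ ⟨j, rfl⟩, Sym2.map_mk f _ _⟩
  · rintro ⟨f, hf, hadj⟩
    refine ⟨_, ⟨f, hf, rfl⟩, ?_⟩
    rintro _ ⟨_, he, rfl⟩
    obtain ⟨j, rfl⟩ := edgeSet_nK2 n ▸ he
    exact (colorGraph_adj.1 (hadj j)).1

end Copies

end CockayneLorimer

open CockayneLorimer Finset

open GR in
/-- Cockayne–Lorimer: the multicolor Ramsey number of matchings. -/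
theorem ramsey_matchings {k : ℕ} (hk : 0 < k) (m : Fin k → ℕ)
    (hpos : ∀ i, 0 < m i) (hdec : ∀ i j : Fin k, i ≤ j → m j ≤ m i) :
    sInf {r | ∀ c : Sym2 (Fin r) → Fin k,
        ∃ i : Fin k, ∃ S ∈ copies (nK2 (m i)) r, ∀ e ∈ S, c e = i}
      = m ⟨0, hk⟩ + 1 + ∑ i : Fin k, (m i - 1) := by
  have : Nonempty (Fin k) := ⟨⟨0, hk⟩⟩
  have hbot : ∀ i : Fin k, ⟨0, hk⟩ ≤ i := fun i => Nat.zero_le i.val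
  simp only [exists_mem_copies_nK2_iff]
  have hsup : univ.sup m = m ⟨0, hk⟩ :=
    le_antisymm (Finset.sup_le fun i _ => hdec _ _ (hbot i)) (le_sup (mem_univ _))
  have hupper : m ⟨0, hk⟩ + 1 + ∑ i, (m i - 1) ∈
      {r | ∀ c : Sym2 (Fin r) → Fin k, ∃ i, m i ≤ matchingNumber (colorGraph c i) univ} :=
    fun c => exists_le_matchingNumber_of_sup_add_sum_lt c m (by simp [hsup])
  refine le_antisymm (Nat.sInf_le hupper) (le_csInf ⟨_, hupper⟩ fun r hr => ?_)
  by_contra! hr'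
  obtain ⟨c, hc⟩ := exists_coloring_matchingNumber_lt (V := Fin r) hbot m hpos
    (by rw [Fintype.card_fin]; omega)
  obtain ⟨i, hi⟩ := hr c
  exact (hc i).not_ge hi
end

section
/- Let n_1 ≥ n_2 ≥ ... ≥ n_k be positive integers. The Ramsey multiplicity M_k(n_1K_2, ..., n_kK_2), i.e. the minimum over all k-edge-colorings of K_r with r = r(n_1K_2,...,n_kK_2) of the total number of copies of n_iK_2 in color i summed over i, is at most (2n_1)!/(2^{n_1} · n_1!). -/
open SimpleGraph Function

/-!
If a `k`-colouring of `K_N` has no colour-`i` copy of `nᵢK₂`, the colour classes have matching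
numbers `νᵢ ≤ nᵢ - 1`. On the other hand every colouring of `K_N` satisfies
`N ≤ ∑ νᵢ + max νᵢ + 1`, which gives the Cockayne–Lorimer bound `r ≤ n₁ + 1 + ∑ (nᵢ - 1)`.
The inequality is proved by induction on `N`. Deleting a vertex that is essential for some
colour class lowers that `νᵢ`, so we may assume that no vertex is essential for any colour.
Then, by Gallai's alternating-path argument, colour class `i` has at most `νᵢ (2 νᵢ + 1)` edges,
and counting the edges of `K_N` finishes.

For the multiplicity, split the `r` vertices into blocks: `2 n₁` vertices for colour `1` and
`nᵢ - 1` for each colour `i ≥ 2`, and give each edge the larger block index of its ends. Every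
colour-`i` edge with `i ≥ 2` meets block `i`, so there is no colour-`i` copy of `nᵢK₂`. The
colour-`1` copies of `n₁K₂` are perfect matchings of the first block, and there are
`(2 n₁)! / (2^{n₁} n₁!)` of these.
-/

namespace Equiv.Perm

variable {α : Type*} {φ ψ : Perm α} {b x y : α}

lemma apply_zpow_apply_of_apply_eq_self (hφ : φ⁻¹ = φ) (hψ : ψ⁻¹ = ψ) (hb : ψ b = b) (n : ℤ) :
    φ (((ψ * φ) ^ n) b) = ((ψ * φ) ^ (-n - 1)) b := by
  have hconj : SemiconjBy φ (ψ * φ) (ψ * φ)⁻¹ := by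
    rw [SemiconjBy, mul_inv_rev, hφ, hψ, mul_assoc]
  have hφb : φ b = ((ψ * φ) ^ (-1 : ℤ)) b := by
    rw [zpow_neg_one, mul_inv_rev, hφ, hψ, mul_apply, hb]
  rw [← mul_apply, (hconj.zpow_right n).eq, inv_zpow', mul_apply, hφb, ← mul_apply, ← zpow_add,
    sub_eq_add_neg]

lemma SameCycle.apply_left_of_apply_eq_self (hφ : φ⁻¹ = φ) (hψ : ψ⁻¹ = ψ) (hb : ψ b = b)
    (h : (ψ * φ).SameCycle b x) : (ψ * φ).SameCycle b (φ x) := by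
  obtain ⟨n, rfl⟩ := h
  exact ⟨-n - 1, (apply_zpow_apply_of_apply_eq_self hφ hψ hb n).symm⟩

lemma SameCycle.apply_right_of_apply_eq_self (hφ : φ⁻¹ = φ) (hψ : ψ⁻¹ = ψ) (hb : ψ b = b)
    (h : (ψ * φ).SameCycle b x) : (ψ * φ).SameCycle b (ψ x) := by
  have hψφ : ψ x = (ψ * φ) (φ x) := by
    have hφφ : φ⁻¹ (φ x) = x := by simp
    rw [hφ] at hφφ
    rw [mul_apply, hφφ]
  rw [hψφ]
  exact sameCycle_apply_right.2 (h.apply_left_of_apply_eq_self hφ hψ hb)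

/-- With `σ = ψ * φ`, a fixed point `σ ^ n b` of `φ` forces `σ ^ (2 n + 1) b = b`, and the two odd exponents
`2 i + 1`, `2 j + 1` generate `j - i`. -/
lemma SameCycle.eq_of_apply_eq_self (hφ : φ⁻¹ = φ) (hψ : ψ⁻¹ = ψ) (hb : ψ b = b)
    (hx : (ψ * φ).SameCycle b x) (hy : (ψ * φ).SameCycle b y) (hφx : φ x = x) (hφy : φ y = y) :
    x = y := by
  set σ := ψ * φ with hσdef
  have odd_fixes {n : ℤ} (h : φ ((σ ^ n) b) = (σ ^ n) b) : (σ ^ (2 * n + 1)) b = b := by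
    rw [apply_zpow_apply_of_apply_eq_self hφ hψ hb, ← hσdef] at h
    rw [show 2 * n + 1 = (n + 1) + n by ring, zpow_add, mul_apply, ← h, ← mul_apply, ← zpow_add,
      show n + 1 + (-n - 1) = 0 by ring, zpow_zero, one_apply]
  obtain ⟨i, rfl⟩ := hx
  obtain ⟨j, rfl⟩ := hy
  have hσ : σ ^ (j - i) = (σ ^ (2 * i + 1)) ^ j * (σ ^ (2 * j + 1)) ^ (-i) := by
    rw [← zpow_mul, ← zpow_mul, ← zpow_add]
    ring_nf
  have hfix : (σ ^ (j - i)) b = b := by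
    rw [hσ, mul_apply, zpow_apply_eq_self_of_apply_eq_self (odd_fixes hφy),
      zpow_apply_eq_self_of_apply_eq_self (odd_fixes hφx)]
  calc (σ ^ i) b = (σ ^ i) ((σ ^ (j - i)) b) := by rw [hfix]
    _ = (σ ^ j) b := by rw [← mul_apply, ← zpow_add, add_sub_cancel]

end Equiv.Perm

namespace SimpleGraph

open Finset Equiv.Perm

variable {V : Type*}

/-- A matching of `H`, encoded as the involution exchanging the two ends of each matching edge
and fixing the unmatched vertices. -/
def IsInvMatching (H : SimpleGraph V) (f : V → V) : Prop :=
  Involutive f ∧ ∀ v, f v ≠ v → H.Adj v (f v)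

variable {H H' : SimpleGraph V} {f g : V → V}

lemma isInvMatching_id (H : SimpleGraph V) : H.IsInvMatching id :=
  ⟨fun _ => rfl, fun _ h => absurd rfl h⟩

lemma IsInvMatching.mono (hf : H.IsInvMatching f) (h : H ≤ H') : H'.IsInvMatching f :=
  ⟨hf.1, fun v hv => h (hf.2 v hv)⟩

lemma IsInvMatching.apply_eq_self_of_forall_not_adj (hf : H.IsInvMatching f) {x : V}
    (hx : ∀ w, ¬ H.Adj x w) : f x = x :=
  not_not.1 fun h => hx _ (hf.2 x h)

lemma IsInvMatching.piecewise [DecidableEq V] (P : Finset V) (hf : H.IsInvMatching f)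
    (hg : H.IsInvMatching g) (hfP : ∀ x ∈ P, f x ∈ P) (hgP : ∀ x ∈ P, g x ∈ P) :
    H.IsInvMatching (P.piecewise g f) := by
  refine ⟨fun x => ?_, fun x hx => ?_⟩
  · by_cases hx : x ∈ P
    · rw [piecewise_eq_of_mem _ _ _ hx, piecewise_eq_of_mem _ _ _ (hgP x hx), hg.1 x]
    · have hfx : f x ∉ P := fun h => hx (hf.1 x ▸ hfP _ h)
      rw [piecewise_eq_of_notMem _ _ _ hx, piecewise_eq_of_notMem _ _ _ hfx, hf.1 x]
  · by_cases hxP : x ∈ P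
    · rw [piecewise_eq_of_mem _ _ _ hxP] at hx ⊢; exact hg.2 x hx
    · rw [piecewise_eq_of_notMem _ _ _ hxP] at hx ⊢; exact hf.2 x hx

lemma Iso.image_edgeSet {G : SimpleGraph V} (e : G ≃g G) :
    Sym2.map e '' G.edgeSet = G.edgeSet := by
  ext x
  refine ⟨?_, fun hx => ⟨x.map e.symm, e.symm.map_mem_edgeSet_iff.2 hx, ?_⟩⟩
  · rintro ⟨y, hy, rfl⟩
    exact e.map_mem_edgeSet_iff.2 hy
  · rw [Sym2.map_map]
    simp

variable [Fintype V] [DecidableEq V]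

def matchedCard (f : V → V) : ℕ := #{v | f v ≠ v}

/-- Twice the matching number of `H`. -/
noncomputable def maxMatchedCard (H : SimpleGraph V) : ℕ :=
  sSup (matchedCard '' {f | H.IsInvMatching f})

def IsMaxInvMatching (H : SimpleGraph V) (f : V → V) : Prop :=
  H.IsInvMatching f ∧ matchedCard f = H.maxMatchedCard

lemma bddAbove_matchedCard (H : SimpleGraph V) :
    BddAbove (matchedCard '' {f | H.IsInvMatching f}) :=
  ⟨Fintype.card V, by rintro _ ⟨f, -, rfl⟩; exact card_le_univ _⟩

lemma IsInvMatching.matchedCard_le (hf : H.IsInvMatching f) :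
    matchedCard f ≤ H.maxMatchedCard :=
  le_csSup (bddAbove_matchedCard H) ⟨f, hf, rfl⟩

lemma exists_isMaxInvMatching (H : SimpleGraph V) : ∃ f, H.IsMaxInvMatching f := by
  obtain ⟨f, hf, hmax⟩ :=
    Nat.sSup_mem (Set.Nonempty.image _ ⟨id, isInvMatching_id H⟩) (bddAbove_matchedCard H)
  exact ⟨f, hf, hmax⟩

lemma maxMatchedCard_mono (h : H ≤ H') : H.maxMatchedCard ≤ H'.maxMatchedCard := by
  obtain ⟨f, hf, hmax⟩ := exists_isMaxInvMatching H
  exact hmax ▸ (hf.mono h).matchedCard_le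

lemma maxMatchedCard_le_card {S : Finset V} (hS : ∀ v w, H.Adj v w → v ∈ S) :
    H.maxMatchedCard ≤ #S := by
  obtain ⟨f, hf, hmax⟩ := exists_isMaxInvMatching H
  rw [← hmax]
  exact card_le_card fun v hv => hS v (f v) (hf.2 v (mem_filter.1 hv).2)

lemma even_matchedCard (hf : Involutive f) : Even (matchedCard f) := by
  have h2 : (hf.toPerm f) ^ 2 = 1 := by ext x; simp [sq, hf x]
  obtain ⟨k, hk⟩ := Equiv.Perm.two_dvd_card_support h2
  exact ⟨k, by rw [matchedCard, ← two_mul, ← hk]; rfl⟩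

lemma even_maxMatchedCard (H : SimpleGraph V) : Even H.maxMatchedCard := by
  obtain ⟨f, hf, hmax⟩ := exists_isMaxInvMatching H
  exact hmax ▸ even_matchedCard hf.1

lemma matchedCard_piecewise (P : Finset V) :
    matchedCard (P.piecewise g f) + #{x ∈ P | f x ≠ x} = matchedCard f + #{x ∈ P | g x ≠ x} := by
  have split (h : V → V) : matchedCard h = #{x ∈ P | h x ≠ x} + #{x ∈ Pᶜ | h x ≠ x} := by
    rw [matchedCard, ← card_union_of_disjoint (disjoint_filter_filter disjoint_compl_right),
      ← filter_union, union_compl]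
  have hP : #{x ∈ P | P.piecewise g f x ≠ x} = #{x ∈ P | g x ≠ x} :=
    congrArg card (filter_congr fun x hx => by rw [piecewise_eq_of_mem _ _ _ hx])
  have hPc : #{x ∈ Pᶜ | P.piecewise g f x ≠ x} = #{x ∈ Pᶜ | f x ≠ x} :=
    congrArg card (filter_congr fun x hx => by
      rw [piecewise_eq_of_notMem _ _ _ (mem_compl.1 hx)])
  rw [split (P.piecewise g f), split f, hP, hPc]
  omega

lemma IsMaxInvMatching.piecewise (P : Finset V) (hf : H.IsMaxInvMatching f)
    (hg : H.IsMaxInvMatching g) (hfP : ∀ x ∈ P, f x ∈ P) (hgP : ∀ x ∈ P, g x ∈ P) :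
    H.IsMaxInvMatching (P.piecewise g f) := by
  have hgf := (IsInvMatching.piecewise P hf.1 hg.1 hfP hgP).matchedCard_le
  have hfg := (IsInvMatching.piecewise P hg.1 hf.1 hgP hfP).matchedCard_le
  have := matchedCard_piecewise (f := f) (g := g) P
  have := matchedCard_piecewise (f := g) (g := f) P
  have := hf.2
  have := hg.2
  exact ⟨IsInvMatching.piecewise P hf.1 hg.1 hfP hgP, by omega⟩

lemma IsInvMatching.matchedCard_add_two_le (hf : H.IsInvMatching f) {u w : V}
    (hu : f u = u) (hw : f w = w) (huw : H.Adj u w) : matchedCard f + 2 ≤ H.maxMatchedCard := by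
  have hswap : H.IsInvMatching (Equiv.swap u w) := by
    refine ⟨Equiv.swap_apply_self u w, fun v hv => ?_⟩
    rcases eq_or_ne v u with rfl | hvu
    · simpa using huw
    rcases eq_or_ne v w with rfl | hvw
    · simpa using huw.symm
    · exact absurd (Equiv.swap_apply_of_ne_of_ne hvu hvw) hv
  have hfP : ∀ x ∈ ({u, w} : Finset V), f x ∈ ({u, w} : Finset V) := by simp [hu, hw]
  have hsP : ∀ x ∈ ({u, w} : Finset V), Equiv.swap u w x ∈ ({u, w} : Finset V) := by simp
  have hcard := matchedCard_piecewise (f := f) (g := Equiv.swap u w) {u, w}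
  have h0 : #{x ∈ ({u, w} : Finset V) | f x ≠ x} = 0 := by simp [hu, hw]
  have h2 : #{x ∈ ({u, w} : Finset V) | Equiv.swap u w x ≠ x} = 2 := by
    rw [filter_true_of_mem (by simp [huw.ne, huw.ne.symm]), card_pair huw.ne]
  have := (IsInvMatching.piecewise {u, w} hf hswap hfP hsP).matchedCard_le
  omega

lemma exists_isMaxInvMatching_apply_eq_self (hle : H' ≤ H)
    (hcard : H.maxMatchedCard ≤ H'.maxMatchedCard) {x : V} (hx : ∀ w, ¬ H'.Adj x w) :
    ∃ g, H.IsMaxInvMatching g ∧ g x = x := by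
  obtain ⟨g, hg, hgmax⟩ := exists_isMaxInvMatching H'
  have := (hg.mono hle).matchedCard_le
  exact ⟨g, ⟨hg.mono hle, by omega⟩, hg.apply_eq_self_of_forall_not_adj hx⟩

/-- Take a maximum matching `g` missing `b`. Trading `f` for `g` on the orbit `P` of `b` under
`g ∘ f` gives a maximum matching that misses `b` and every vertex outside `P` missed by `f`. As
`b` is adjacent to `x` and `y`, both lie in `P`, and `P` contains only one vertex missed
by `f`. -/
lemma IsMaxInvMatching.eq_of_adj_of_adj (hall : ∀ v, ∃ g, H.IsMaxInvMatching g ∧ g v = v)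
    (hf : H.IsMaxInvMatching f) {b x y : V} (hx : f x = x) (hy : f y = y)
    (hbx : H.Adj b x) (hby : H.Adj b y) : x = y := by
  classical
  obtain ⟨g, hg, hgb⟩ := hall b
  set φ := hf.1.1.toPerm f
  set ψ := hg.1.1.toPerm g
  have hφ : φ⁻¹ = φ := hf.1.1.toPerm_symm
  have hψ : ψ⁻¹ = ψ := hg.1.1.toPerm_symm
  set P : Finset V := {v | (ψ * φ).SameCycle b v}
  have hP {v : V} : v ∈ P ↔ (ψ * φ).SameCycle b v := by simp [P]
  have hf' := hf.piecewise P hg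
    (fun v hv => hP.2 ((hP.1 hv).apply_left_of_apply_eq_self hφ hψ hgb))
    (fun v hv => hP.2 ((hP.1 hv).apply_right_of_apply_eq_self hφ hψ hgb))
  have hf'b : P.piecewise g f b = b := by
    rw [piecewise_eq_of_mem _ _ _ (hP.2 (SameCycle.refl _ _)), hgb]
  have hmem {z : V} (hz : f z = z) (hbz : H.Adj b z) : z ∈ P := by
    by_contra hzP
    have := hf'.1.matchedCard_add_two_le hf'b (by rw [piecewise_eq_of_notMem _ _ _ hzP, hz]) hbz
    have := hf'.2
    omega
  exact (hP.1 (hmem hx hbx)).eq_of_apply_eq_self hφ hψ hgb (hP.1 (hmem hy hby)) hx hy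

lemma IsMaxInvMatching.card_adj_apply_eq_self_le [DecidableRel H.Adj]
    (hall : ∀ v, ∃ g, H.IsMaxInvMatching g ∧ g v = v) (hf : H.IsMaxInvMatching f) :
    #{p : V × V | H.Adj p.1 p.2 ∧ f p.1 = p.1} ≤ H.maxMatchedCard := by
  rw [← hf.2, matchedCard]
  refine card_le_card_of_injOn Prod.snd (fun p hp => ?_) (fun p hp q hq hpq => ?_)
  · obtain ⟨hadj, h1⟩ := (mem_filter.1 hp).2
    refine mem_filter.2 ⟨mem_univ _, fun h2 => ?_⟩
    have := hf.1.matchedCard_add_two_le h1 h2 hadj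
    have := hf.2
    omega
  · obtain ⟨hp, hp1⟩ := (mem_filter.1 hp).2
    obtain ⟨hq, hq1⟩ := (mem_filter.1 hq).2
    have hpq : p.2 = q.2 := hpq
    rw [← hpq] at hq
    exact Prod.ext (hf.eq_of_adj_of_adj hall hp1 hq1 hp.symm hq.symm) hpq

/-- Gallai's bound `|E| ≤ ν (2ν + 1)`, `ν` the matching number. Fix a maximum matching `f`. A
dart of `H` either joins two matched vertices or has an unmatched end. Each matched vertex has
at most one unmatched neighbour (`eq_of_adj_of_adj`), so there are at most `2ν` darts of each
of the two orientations of the second kind. -/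
theorem two_mul_card_edgeFinset_le [DecidableRel H.Adj]
    (hall : ∀ v, ∃ g, H.IsMaxInvMatching g ∧ g v = v) :
    2 * #H.edgeFinset ≤ H.maxMatchedCard * (H.maxMatchedCard + 1) := by
  obtain ⟨f, hf⟩ := exists_isMaxInvMatching H
  set ν := H.maxMatchedCard
  set C : Finset V := {v | f v ≠ v}
  set A : Finset (V × V) := {p | H.Adj p.1 p.2 ∧ f p.1 = p.1}
  set D : Finset (V × V) := {p | H.Adj p.1 p.2}
  have hC : #C = ν := hf.2
  have hA : #A ≤ ν := hf.card_adj_apply_eq_self_le hall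
  have hdarts : D ⊆ C.offDiag ∪ (A ∪ A.map (Equiv.prodComm V V).toEmbedding) := by
    rintro ⟨a, b⟩ hab
    have hab : H.Adj a b := (mem_filter.1 hab).2
    simp only [C, A, mem_union, mem_offDiag, mem_filter, mem_univ, true_and, mem_map_equiv,
      Equiv.prodComm_symm, Equiv.prodComm_apply, Prod.swap_prod_mk]
    by_cases ha : f a = a
    · exact Or.inr (Or.inl ⟨hab, ha⟩)
    by_cases hb : f b = b
    · exact Or.inr (Or.inr ⟨hab.symm, hb⟩)
    exact Or.inl ⟨ha, hb, hab.ne⟩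
  calc 2 * #H.edgeFinset = #D := two_mul_card_edgeFinset H
    _ ≤ #C.offDiag + (#A + #A) := by
      refine (card_le_card hdarts).trans ((card_union_le _ _).trans ?_)
      exact Nat.add_le_add_left ((card_union_le _ _).trans_eq (by rw [card_map])) _
    _ ≤ (ν * ν - ν) + (ν + ν) := by rw [offDiag_card, hC]; omega
    _ = ν * (ν + 1) := by have := Nat.le_mul_self ν; rw [Nat.mul_succ]; omega

lemma IsInvMatching.exists_injective_adj [LinearOrder V] (hf : H.IsInvMatching f) {n : ℕ}
    (hn : 2 * n ≤ matchedCard f) :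
    ∃ F : Fin n × Fin 2 → V, Function.Injective F ∧ ∀ j, H.Adj (F (j, 0)) (F (j, 1)) := by
  set L : Finset V := {v | v < f v}
  have hL : n ≤ #L := by
    have hsplit : matchedCard f ≤ #L + #(L.image f) := by
      refine (card_le_card fun v hv => ?_).trans (card_union_le _ _)
      have hv : f v ≠ v := (mem_filter.1 hv).2
      rcases hv.lt_or_gt with h | h
      · exact mem_union_right _ (mem_image.2 ⟨f v, by simpa [L, hf.1 v] using h, hf.1 v⟩)
      · exact mem_union_left _ (by simpa [L] using h)
    have := card_image_le (s := L) (f := f)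
    omega
  set l := L.orderEmbOfCardLe hL
  have hl (j : Fin n) : l j < f (l j) := by simpa [L] using L.orderEmbOfCardLe_mem hL j
  refine ⟨fun p => (f^[p.2]) (l p.1), ?_, fun j => hf.2 _ (hl j).ne'⟩
  rintro ⟨j, s⟩ ⟨j', t⟩ h
  fin_cases s <;> fin_cases t <;> simp only [Function.iterate_zero, Function.iterate_one, id] at h
  · rw [l.injective h]
  · have h' := hl j
    rw [h, hf.1] at h'
    exact absurd h' (lt_asymm (hl j'))
  · have h' := hl j'
    rw [← h, hf.1] at h'
    exact absurd h' (lt_asymm (hl j))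
  · rw [l.injective (hf.1.injective h)]

end SimpleGraph

namespace GR

open Finset SimpleGraph Function Nat

lemma nK2_adj {n : ℕ} {a b : Fin n × Fin 2} : (nK2 n).Adj a b ↔ a ≠ b ∧ a.1 = b.1 := by
  simp only [nK2, fromRel_adj]
  exact and_congr_right fun _ => or_iff_left_of_imp Eq.symm

lemma mem_edgeSet_nK2 {n : ℕ} {e : Sym2 (Fin n × Fin 2)} :
    e ∈ (nK2 n).edgeSet ↔ ∃ j, e = s((j, 0), (j, 1)) := by
  induction e using Sym2.ind with
  | _ a b =>
  rw [mem_edgeSet, nK2_adj]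
  obtain ⟨j, s⟩ := a
  obtain ⟨j', t⟩ := b
  constructor
  · rintro ⟨hne, rfl : j = j'⟩
    refine ⟨j, ?_⟩
    fin_cases s <;> fin_cases t <;> simp_all [Sym2.eq_swap]
  · rintro ⟨k, hk⟩
    rcases Sym2.eq_iff.1 hk with ⟨h1, h2⟩ | ⟨h1, h2⟩ <;> simp_all

lemma forall_mem_image_edgeSet_nK2 {n : ℕ} {W : Type*} {F : Fin n × Fin 2 → W}
    {P : Sym2 W → Prop} :
    (∀ e ∈ Sym2.map F '' (nK2 n).edgeSet, P e) ↔ ∀ j, P s(F (j, 0), F (j, 1)) := by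
  simp only [Set.forall_mem_image, mem_edgeSet_nK2]
  constructor
  · exact fun h j => h ⟨j, rfl⟩
  · rintro h _ ⟨j, rfl⟩
    exact h j

section ColorGraph

variable {V ι : Type*}

def colorGraph (c : Sym2 V → ι) (i : ι) (S : Finset V) : SimpleGraph V where
  Adj v w := v ≠ w ∧ v ∈ S ∧ w ∈ S ∧ c s(v, w) = i
  symm := ⟨fun _ _ h => ⟨h.1.symm, h.2.2.1, h.2.1, Sym2.eq_swap ▸ h.2.2.2⟩⟩
  loopless := ⟨fun _ h => h.1 rfl⟩

instance [DecidableEq V] [DecidableEq ι] (c : Sym2 V → ι) (i : ι) (S : Finset V) :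
    DecidableRel (colorGraph c i S).Adj :=
  fun v w => inferInstanceAs (Decidable (v ≠ w ∧ v ∈ S ∧ w ∈ S ∧ c s(v, w) = i))

variable {c : Sym2 V → ι}

lemma colorGraph_mono (i : ι) {S T : Finset V} (h : S ⊆ T) : colorGraph c i S ≤ colorGraph c i T :=
  fun _ _ hvw => ⟨hvw.1, h hvw.2.1, h hvw.2.2.1, hvw.2.2.2⟩

variable [Fintype V] [DecidableEq V] [Fintype ι] [DecidableEq ι]

lemma sum_two_mul_card_edgeFinset_colorGraph (S : Finset V) :
    ∑ i, 2 * #(colorGraph c i S).edgeFinset = #S * #S - #S := by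
  rw [← offDiag_card, card_eq_sum_card_fiberwise (f := fun p => c s(p.1, p.2))
    (fun _ _ => mem_univ _)]
  refine sum_congr rfl fun i _ => ?_
  rw [two_mul_card_edgeFinset]
  congr 1
  ext ⟨v, w⟩
  simp only [mem_filter, mem_univ, true_and, mem_offDiag]
  simp [colorGraph]
  tauto

/-- Counting the edges of `K_S` colour by colour with Gallai's bound gives
`|S|² - |S| ≤ (∑ i, ν i) (M + 1)`, which forces the inequality. -/
lemma two_mul_card_le_of_forall_le_maxMatchedCard_erase (S : Finset V)
    (hess : ∀ v ∈ S, ∀ i, (colorGraph c i S).maxMatchedCard ≤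
      (colorGraph c i (S.erase v)).maxMatchedCard) :
    2 * #S ≤ ∑ i, (colorGraph c i S).maxMatchedCard +
      univ.sup (fun i => (colorGraph c i S).maxMatchedCard) + 2 := by
  set ν := fun i => (colorGraph c i S).maxMatchedCard
  set M := univ.sup ν
  have hall (i : ι) (x : V) : ∃ g, (colorGraph c i S).IsMaxInvMatching g ∧ g x = x := by
    refine exists_isMaxInvMatching_apply_eq_self (colorGraph_mono (c := c) i (erase_subset x S)) ?_
      fun w hxw => by simp [colorGraph] at hxw
    by_cases hx : x ∈ S
    · exact hess x hx i
    · rw [erase_eq_of_notMem hx]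
  have hedges : #S * #S - #S ≤ (∑ i, ν i) * (M + 1) := by
    rw [← sum_two_mul_card_edgeFinset_colorGraph (c := c), sum_mul]
    exact sum_le_sum fun i _ => (two_mul_card_edgeFinset_le (hall i)).trans
      (Nat.mul_le_mul_left _ (Nat.succ_le_succ (le_sup (f := ν) (mem_univ i))))
  have hM : M ≤ #S := Finset.sup_le fun i _ => maxMatchedCard_le_card fun _ _ h => h.2.1
  generalize ∑ i, ν i = s at hedges ⊢
  generalize #S = n at hedges hM ⊢
  by_contra! hlt
  have hsq := Nat.le_mul_self n
  zify [hsq] at hedges hlt hM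
  nlinarith [mul_le_mul_of_nonneg_right (show (s : ℤ) ≤ 2 * n - M - 3 by omega)
    (show (0 : ℤ) ≤ M + 1 by omega), sq_nonneg (2 * ((n : ℤ) - M) - 3)]

/-- Deleting a vertex that is essential for colour `i` lowers the (even) `maxMatchedCard` of
colour `i` by at least `2`, which pays for the induction step. -/
theorem two_mul_card_le_sum_maxMatchedCard (c : Sym2 V → ι) (S : Finset V) :
    2 * #S ≤ ∑ i, (colorGraph c i S).maxMatchedCard +
      univ.sup (fun i => (colorGraph c i S).maxMatchedCard) + 2 := by
  induction S using Finset.strongInduction with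
  | H S ih =>
  by_cases hess : ∀ v ∈ S, ∀ i, (colorGraph c i S).maxMatchedCard ≤
      (colorGraph c i (S.erase v)).maxMatchedCard
  · exact two_mul_card_le_of_forall_le_maxMatchedCard_erase S hess
  push Not at hess
  obtain ⟨v, hv, i, hlt⟩ := hess
  have hmono (j : ι) := maxMatchedCard_mono (colorGraph_mono (c := c) j (erase_subset v S))
  have hdrop : (colorGraph c i (S.erase v)).maxMatchedCard + 2 ≤
      (colorGraph c i S).maxMatchedCard := by
    obtain ⟨a, ha⟩ := even_maxMatchedCard (colorGraph c i (S.erase v))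
    obtain ⟨b, hb⟩ := even_maxMatchedCard (colorGraph c i S)
    omega
  have hsum : ∑ j, (colorGraph c j (S.erase v)).maxMatchedCard + 2 ≤
      ∑ j, (colorGraph c j S).maxMatchedCard := by
    rw [← add_sum_erase _ _ (mem_univ i), ← add_sum_erase _ _ (mem_univ i)]
    have := sum_le_sum fun j (_ : j ∈ univ.erase i) => hmono j
    omega
  have hsup := sup_mono_fun (s := univ) fun j _ => hmono j
  have := ih _ (erase_ssubset hv)
  rw [card_erase_of_mem hv] at this
  omega

end ColorGraph

theorem cockayne_lorimer {ι : Type*} [Fintype ι] [DecidableEq ι] (m : ι → ℕ) (i₀ : ι)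
    (hmax : ∀ i, m i ≤ m i₀) (c : Sym2 (Fin (m i₀ + 1 + ∑ i, (m i - 1))) → ι) :
    ∃ i, ∃ S ∈ copies (nK2 (m i)) (m i₀ + 1 + ∑ i, (m i - 1)), ∀ e ∈ S, c e = i := by
  by_contra! hno
  have hν (i : ι) : (colorGraph c i univ).maxMatchedCard + 2 ≤ 2 * m i := by
    obtain ⟨f, hf, hfmax⟩ := exists_isMaxInvMatching (colorGraph c i univ)
    have hlt : matchedCard f < 2 * m i := by
      by_contra! hle
      obtain ⟨F, hF, hadj⟩ := hf.exists_injective_adj hle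
      obtain ⟨e, he, hce⟩ := hno i _ ⟨F, hF, rfl⟩
      exact hce (forall_mem_image_edgeSet_nK2 (P := (c · = i)) |>.2 (fun j => (hadj j).2.2.2) e he)
    obtain ⟨a, ha⟩ := even_maxMatchedCard (colorGraph c i univ)
    omega
  have hsum : ∑ i, (colorGraph c i univ).maxMatchedCard ≤ 2 * ∑ i, (m i - 1) := by
    rw [mul_sum]
    exact sum_le_sum fun i _ => by have := hν i; omega
  have hsup : univ.sup (fun i => (colorGraph c i univ).maxMatchedCard) ≤ 2 * (m i₀ - 1) :=
    Finset.sup_le fun i _ => by have := hν i; have := hmax i; omega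
  have := two_mul_card_le_sum_maxMatchedCard c univ
  rw [Finset.card_univ, Fintype.card_fin] at this
  have := hν i₀
  omega

/-- The relabellings of `nK₂` that permute its edges and flip each edge independently. -/
def nK2Relabel (n : ℕ) (g : Equiv.Perm (Fin n) × (Fin n → Equiv.Perm (Fin 2))) :
    Fin n × Fin 2 ≃ Fin n × Fin 2 :=
  Equiv.prodShear g.1 g.2

lemma nK2Relabel_injective (n : ℕ) : Injective (nK2Relabel n) := by
  rintro ⟨σ, τ⟩ ⟨σ', τ'⟩ h
  have happ (p : Fin n × Fin 2) : (σ p.1, τ p.1 p.2) = (σ' p.1, τ' p.1 p.2) :=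
    congrArg (· p) (congrArg DFunLike.coe h)
  refine Prod.ext (Equiv.ext fun j => (Prod.ext_iff.1 (happ (j, 0))).1) (funext fun j =>
    Equiv.ext fun t => (Prod.ext_iff.1 (happ (j, t))).2)

def nK2RelabelIso (n : ℕ) (g : Equiv.Perm (Fin n) × (Fin n → Equiv.Perm (Fin 2))) :
    nK2 n ≃g nK2 n where
  toEquiv := nK2Relabel n g
  map_rel_iff' {a b} := by
    rw [nK2_adj, nK2_adj, (nK2Relabel n g).injective.ne_iff]
    exact and_congr_right fun _ => g.1.injective.eq_iff

lemma image_edgeSet_nK2_comp_relabel {n : ℕ} {W : Type*} (F : Fin n × Fin 2 → W)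
    (g : Equiv.Perm (Fin n) × (Fin n → Equiv.Perm (Fin 2))) :
    Sym2.map (F ∘ nK2Relabel n g) '' (nK2 n).edgeSet = Sym2.map F '' (nK2 n).edgeSet := by
  rw [Sym2.map_comp, Set.image_comp]
  exact congrArg _ (nK2RelabelIso n g).image_edgeSet

lemma apply_mem_of_image_edgeSet_nK2 {n R : ℕ} {S : Set (Sym2 (Fin R))} {B : Finset (Fin R)}
    {F : Fin n × Fin 2 → Fin R} (hS : S = Sym2.map F '' (nK2 n).edgeSet)
    (hB : ∀ e ∈ S, ∀ v ∈ e, v ∈ B) (p : Fin n × Fin 2) : F p ∈ B := by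
  have hedge := (forall_mem_image_edgeSet_nK2 (P := (· ∈ S))).1 (fun e he => hS ▸ he) p.1
  obtain ⟨j, t⟩ := p
  fin_cases t
  · exact hB _ hedge _ (Sym2.mem_mk_left _ _)
  · exact hB _ hedge _ (Sym2.mem_mk_right _ _)

lemma le_card_of_mem_copies_nK2 {n R : ℕ} {S : Set (Sym2 (Fin R))} (hS : S ∈ copies (nK2 n) R)
    {B : Finset (Fin R)} (hB : ∀ e ∈ S, ∃ v ∈ e, v ∈ B) : n ≤ #B := by
  obtain ⟨F, hF, rfl⟩ := hS
  have hcover (j : Fin n) : ∃ t, F (j, t) ∈ B := by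
    obtain ⟨v, hv, hvB⟩ := (forall_mem_image_edgeSet_nK2 (P := (∃ v ∈ ·, v ∈ B))).1 hB j
    rcases Sym2.mem_iff.1 hv with rfl | rfl
    exacts [⟨0, hvB⟩, ⟨1, hvB⟩]
  choose t ht using hcover
  simpa using card_le_card_of_injOn (s := univ) (fun j => F (j, t j)) (fun j _ => ht j)
    fun j _ j' _ h => congrArg Prod.fst (hF h)

/-- Labelling each copy by an embedding `Fin n × Fin 2 ↪ B` and precomposing with the `2ⁿ n!`
relabellings of `nK₂` is injective, and there are at most `(2 n)!` such embeddings. -/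
theorem ncard_copies_nK2_le {n R : ℕ} (B : Finset (Fin R)) (hB : #B ≤ 2 * n) :
    {S | S ∈ copies (nK2 n) R ∧ ∀ e ∈ S, ∀ v ∈ e, v ∈ B}.ncard ≤ (2 * n)! / (2 ^ n * n !) := by
  set T := {S | S ∈ copies (nK2 n) R ∧ ∀ e ∈ S, ∀ v ∈ e, v ∈ B}
  have hlabel (S : T) : ∃ F : Fin n × Fin 2 ↪ B,
      (S : Set (Sym2 (Fin R))) = Sym2.map (Subtype.val ∘ F) '' (nK2 n).edgeSet := by
    obtain ⟨⟨F, hF, hSF⟩, hSB⟩ := S.2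
    exact ⟨⟨fun p => ⟨F p, apply_mem_of_image_edgeSet_nK2 hSF hSB p⟩,
      fun p q h => hF (congrArg Subtype.val h)⟩, hSF⟩
  choose W hW using hlabel
  let Θ : T × (Equiv.Perm (Fin n) × (Fin n → Equiv.Perm (Fin 2))) → (Fin n × Fin 2 ↪ B) :=
    fun x => (nK2Relabel n x.2).toEmbedding.trans (W x.1)
  have hΘ : Injective Θ := by
    rintro ⟨S, g⟩ ⟨S', g'⟩ h
    have hfun : W S ∘ nK2Relabel n g = W S' ∘ nK2Relabel n g' :=
      congrArg DFunLike.coe h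
    have hS : S = S' := Subtype.ext <| by
      rw [hW S, hW S', ← image_edgeSet_nK2_comp_relabel _ g,
        ← image_edgeSet_nK2_comp_relabel (Subtype.val ∘ W S') g']
      exact congrArg (fun F => Sym2.map (Subtype.val ∘ F) '' (nK2 n).edgeSet) hfun
    subst hS
    have hg : nK2Relabel n g = nK2Relabel n g' :=
      Equiv.ext fun p => (W S).injective (congrFun hfun p)
    rw [nK2Relabel_injective n hg]
  have hcard : T.ncard * (2 ^ n * n !) ≤ (2 * n)! := calc
    T.ncard * (2 ^ n * n !) =
        Nat.card (T × (Equiv.Perm (Fin n) × (Fin n → Equiv.Perm (Fin 2)))) := by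
      simp [Nat.card_prod, Nat.card_coe_set_eq, Nat.card_eq_fintype_card, Fintype.card_perm,
        mul_comm]
    _ ≤ Nat.card (Fin n × Fin 2 ↪ B) := Nat.card_le_card_of_injective Θ hΘ
    _ = (#B).descFactorial (2 * n) := by
      simp [Nat.card_eq_fintype_card, Fintype.card_embedding_eq, mul_comm]
    _ ≤ (2 * n).descFactorial (2 * n) := Nat.descFactorial_le _ hB
    _ = (2 * n)! := Nat.descFactorial_self _
  exact (Nat.le_div_iff_mul_le (by positivity)).2 hcard

lemma exists_card_fiber_le {α ι : Type*} [Fintype α] [Fintype ι] [DecidableEq ι] (cap : ι → ℕ)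
    (h : Fintype.card α ≤ ∑ i, cap i) : ∃ β : α → ι, ∀ i, #{a | β a = i} ≤ cap i := by
  obtain ⟨e⟩ := Embedding.nonempty_of_card_le (β := Σ i, Fin (cap i)) (by simpa using h)
  refine ⟨fun a => (e a).1, fun i => ?_⟩
  calc #{a | (e a).1 = i} ≤ #(({i} : Finset ι).sigma fun _ => univ) :=
        card_le_card_of_injOn e (fun a ha => by simpa using ha) e.injective.injOn
    _ = cap i := by simp

section BlockColoring

def blockColoring {V ι : Type*} [LinearOrder ι] (β : V → ι) : Sym2 V → ι :=
  Sym2.lift ⟨fun a b => max (β a) (β b), fun _ _ => max_comm _ _⟩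

variable {V ι : Type*} [LinearOrder ι] {β : V → ι} {e : Sym2 V} {i : ι}

lemma exists_mem_of_blockColoring_eq (h : blockColoring β e = i) : ∃ v ∈ e, β v = i := by
  induction e using Sym2.ind with
  | _ a b =>
  rcases max_choice (β a) (β b) with hab | hab
  · exact ⟨a, Sym2.mem_mk_left a b, hab ▸ h⟩
  · exact ⟨b, Sym2.mem_mk_right a b, hab ▸ h⟩

lemma forall_mem_of_blockColoring_eq (hi : ∀ j, i ≤ j) (h : blockColoring β e = i) :
    ∀ v ∈ e, β v = i := by
  induction e using Sym2.ind with
  | _ a b =>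
  have hle : max (β a) (β b) ≤ i := h.le
  intro v hv
  rcases Sym2.mem_iff.1 hv with rfl | rfl
  exacts [le_antisymm (le_max_left _ _ |>.trans hle) (hi _),
    le_antisymm (le_max_right _ _ |>.trans hle) (hi _)]

lemma ncard_copies_blockColoring_eq_zero {n R : ℕ} {β : Fin R → ι} (h : #{v | β v = i} < n) :
    {S | S ∈ copies (nK2 n) R ∧ ∀ e ∈ S, blockColoring β e = i}.ncard = 0 := by
  rw [Set.ncard_eq_zero (Set.toFinite _), Set.eq_empty_iff_forall_notMem]
  rintro S ⟨hS, hc⟩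
  have := le_card_of_mem_copies_nK2 hS (B := {v | β v = i}) fun e he => by
    simpa using exists_mem_of_blockColoring_eq (hc e he)
  omega

lemma ncard_copies_blockColoring_le {n R : ℕ} {β : Fin R → ι} (hi : ∀ j, i ≤ j)
    (h : #{v | β v = i} ≤ 2 * n) :
    {S | S ∈ copies (nK2 n) R ∧ ∀ e ∈ S, blockColoring β e = i}.ncard ≤
      (2 * n)! / (2 ^ n * n !) := by
  refine (Set.ncard_le_ncard ?_ (Set.toFinite _)).trans (ncard_copies_nK2_le _ h)
  exact fun S ⟨hS, hc⟩ => ⟨hS, fun e he v hv => by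
    simpa using forall_mem_of_blockColoring_eq hi (hc e he) v hv⟩

end BlockColoring

end GR

open GR Nat in
/-- The Ramsey multiplicity of matchings is at most `(2n₁)!/(2^{n₁} n₁!)`. -/
theorem ramsey_multiplicity_matchings {k : ℕ} (hk : 0 < k) (m : Fin k → ℕ)
    (hpos : ∀ i, 0 < m i) (hdec : ∀ i j : Fin k, i ≤ j → m j ≤ m i) :
    sInf {t | ∃ c : Sym2 (Fin (sInf {r | ∀ c : Sym2 (Fin r) → Fin k,
          ∃ i : Fin k, ∃ S ∈ copies (nK2 (m i)) r, ∀ e ∈ S, c e = i})) → Fin k,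
        t = ∑ i : Fin k,
          Set.ncard {S | S ∈ copies (nK2 (m i)) _ ∧ ∀ e ∈ S, c e = i}}
      ≤ (2 * m ⟨0, hk⟩)! / (2 ^ (m ⟨0, hk⟩) * (m ⟨0, hk⟩)!) := by
  set i₀ : Fin k := ⟨0, hk⟩
  have hi₀ (i : Fin k) : i₀ ≤ i := Nat.zero_le _
  set R := sInf {r | ∀ c : Sym2 (Fin r) → Fin k,
    ∃ i : Fin k, ∃ S ∈ copies (nK2 (m i)) r, ∀ e ∈ S, c e = i}
  have hR : R ≤ m i₀ + 1 + ∑ i, (m i - 1) :=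
    Nat.sInf_le (cockayne_lorimer m i₀ fun i => hdec i₀ i (hi₀ i))
  -- block `i₀` gets `2 m i₀` vertices and block `i ≠ i₀` gets `m i - 1`
  obtain ⟨β, hβ⟩ := exists_card_fiber_le (α := Fin R)
    (fun i => m i - 1 + if i = i₀ then m i₀ + 1 else 0)
    (by simpa [Finset.sum_add_distrib, add_comm] using hR)
  calc _ ≤ ∑ i, {S | S ∈ copies (nK2 (m i)) R ∧ ∀ e ∈ S, blockColoring β e = i}.ncard :=
        by exact Nat.sInf_le ⟨blockColoring β, rfl⟩
    _ = {S | S ∈ copies (nK2 (m i₀)) R ∧ ∀ e ∈ S, blockColoring β e = i₀}.ncard :=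
        Finset.sum_eq_single i₀ (fun i _ hi => ncard_copies_blockColoring_eq_zero <| by
          have := hβ i
          rw [if_neg hi] at this
          have := hpos i
          omega) (by simp)
    _ ≤ _ := ncard_copies_blockColoring_le hi₀ <| by
        have := hβ i₀
        rw [if_pos rfl] at this
        have := hpos i₀
        omega
end

section
/- In any 3-edge-coloring of K_{4n-2} (n ≥ 2) with colors red, blue, green, if there exist n vertices each of red degree at least 2n − 1, then there are at least n! distinct red copies of nK_2. -/
open SimpleGraph Function

open Finset in
lemma count_inj {α : Type*} [DecidableEq α] [Fintype α] :
    ∀ (k : ℕ) (A : Fin k → Finset α), (∀ i, k ≤ (A i).card) →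
      Nat.factorial k ≤ (Finset.univ.filter
        (fun u : Fin k → α => Function.Injective u ∧ ∀ i, u i ∈ A i)).card := by
  intro k
  induction k with
  | zero =>
    intro A hA
    rw [Finset.filter_true_of_mem]
    · simp
    · intro u _
      exact ⟨fun a b _ => Subsingleton.elim a b, fun i => i.elim0⟩
  | succ k ih =>
    intro A hA
    set T := Finset.univ.filter
      (fun u : Fin (k+1) → α => Function.Injective u ∧ ∀ i, u i ∈ A i) with hT
    set D := (A (Fin.last k)).sigma (fun x => Finset.univ.filter
      (fun u : Fin k → α => Function.Injective u ∧ ∀ i, u i ∈ (A i.castSucc).erase x)) with hD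
    have hmem : ∀ p : (_ : α) × (Fin k → α), p ∈ D →
        p.1 ∈ A (Fin.last k) ∧ Function.Injective p.2 ∧
          ∀ i, p.2 i ∈ (A i.castSucc).erase p.1 := by
      intro p hp
      simp only [hD, Finset.mem_sigma, Finset.mem_filter, Finset.mem_univ, true_and] at hp
      exact ⟨hp.1, hp.2.1, hp.2.2⟩
    have hmap : ∀ p ∈ D, (Fin.snoc p.2 p.1 : Fin (k+1) → α) ∈ T := by
      intro p hp
      obtain ⟨h1, h2, h3⟩ := hmem p hp
      simp only [hT, Finset.mem_filter, Finset.mem_univ, true_and]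
      constructor
      · intro a b hab
        induction a using Fin.lastCases with
        | last =>
          induction b using Fin.lastCases with
          | last => rfl
          | cast j =>
            rw [Fin.snoc_last, Fin.snoc_castSucc] at hab
            exact absurd hab.symm (Finset.ne_of_mem_erase (h3 j))
        | cast i =>
          induction b using Fin.lastCases with
          | last =>
            rw [Fin.snoc_last, Fin.snoc_castSucc] at hab
            exact absurd hab (Finset.ne_of_mem_erase (h3 i))
          | cast j =>
            rw [Fin.snoc_castSucc, Fin.snoc_castSucc] at hab
            exact congrArg _ (h2 hab)
      · intro i
        induction i using Fin.lastCases with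
        | last => rw [Fin.snoc_last]; exact h1
        | cast i =>
          rw [Fin.snoc_castSucc]
          exact Finset.mem_of_mem_erase (h3 i)
    have hinj : Set.InjOn
        (fun p : (_ : α) × (Fin k → α) => (Fin.snoc p.2 p.1 : Fin (k+1) → α)) ↑D := by
      intro p _ q _ h
      simp only at h
      have h1 : p.1 = q.1 := by
        have := congrFun h (Fin.last k)
        simpa using this
      have h2 : p.2 = q.2 := by
        funext i
        have := congrFun h i.castSucc
        simpa using this
      exact Sigma.ext h1 (by rw [h2])
    have hcard := Finset.card_le_card_of_injOn _ hmap hinj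
    have hDcard : D.card = ∑ x ∈ A (Fin.last k), (Finset.univ.filter
        (fun u : Fin k → α => Function.Injective u ∧ ∀ i, u i ∈ (A i.castSucc).erase x)).card := by
      rw [hD, Finset.card_sigma]
    have hsum : (A (Fin.last k)).card * Nat.factorial k ≤ D.card := by
      rw [hDcard]
      calc (A (Fin.last k)).card * Nat.factorial k
          = ∑ _x ∈ A (Fin.last k), Nat.factorial k := by
            rw [Finset.sum_const, smul_eq_mul]
        _ ≤ _ := by
            apply Finset.sum_le_sum
            intro x _
            apply ih
            intro i
            show k ≤ ((A i.castSucc).erase x).card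
            have h1 := hA i.castSucc
            have h2 := Finset.pred_card_le_card_erase (s := A i.castSucc) (a := x)
            exact le_trans (Nat.le_sub_one_of_lt h1) h2
    have hAl := hA (Fin.last k)
    have hstep : (k+1) * Nat.factorial k ≤ (A (Fin.last k)).card * Nat.factorial k :=
      Nat.mul_le_mul hAl le_rfl
    rw [Nat.factorial_succ]
    exact le_trans hstep (le_trans hsum hcard)

open GR Nat in
/-- In any 3-coloring of `K_{4n−2}` with `n` vertices of red degree at least `2n − 1`,
there are at least `n!` red copies of `nK₂`.  Red is color `0`. -/
theorem many_red_matchings (n : ℕ) (hn : 2 ≤ n)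
    (c : Sym2 (Fin (4 * n - 2)) → Fin 3)
    (V : Finset (Fin (4 * n - 2))) (hV : V.card = n)
    (hdeg : ∀ v ∈ V, 2 * n - 1 ≤ Set.ncard {u : Fin (4 * n - 2) | u ≠ v ∧ c s(u, v) = 0}) :
    n ! ≤ Set.ncard {S | S ∈ copies (nK2 n) (4 * n - 2) ∧ ∀ e ∈ S, c e = 0} := by
  classical
  set v : Fin n → Fin (4 * n - 2) := fun i => ((V.orderIsoOfFin hV) i : Fin (4 * n - 2))
    with hvdef
  have hvV : ∀ i, v i ∈ V := fun i => ((V.orderIsoOfFin hV) i).2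
  have hvinj : Function.Injective v := fun a b hab =>
    (V.orderIsoOfFin hV).injective (Subtype.ext hab)
  set A : Fin n → Finset (Fin (4 * n - 2)) :=
    fun i => Finset.univ.filter (fun x => x ∉ V ∧ c s(x, v i) = 0) with hA
  have hAcard : ∀ i, n ≤ (A i).card := by
    intro i
    set B := Finset.univ.filter
      (fun x : Fin (4 * n - 2) => x ≠ v i ∧ c s(x, v i) = 0) with hB
    have hBset : {u : Fin (4 * n - 2) | u ≠ v i ∧ c s(u, v i) = 0} = ↑B := by
      ext x; simp [hB]
    have h1 : 2 * n - 1 ≤ B.card := by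
      have := hdeg (v i) (hvV i)
      rwa [hBset, Set.ncard_coe_finset] at this
    have h2 : B ∩ V ⊆ V.erase (v i) := by
      intro x hx
      simp only [hB, Finset.mem_inter, Finset.mem_filter, Finset.mem_univ, true_and] at hx
      exact Finset.mem_erase.2 ⟨hx.1.1, hx.2⟩
    have h3 : B \ V ⊆ A i := by
      intro x hx
      simp only [hB, hA, Finset.mem_sdiff, Finset.mem_filter, Finset.mem_univ, true_and]
        at hx ⊢
      exact ⟨hx.2, hx.1.2⟩
    have h4 := Finset.card_inter_add_card_sdiff B V
    have h5 : (B ∩ V).card ≤ n - 1 := by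
      have := Finset.card_le_card h2
      rwa [Finset.card_erase_of_mem (hvV i), hV] at this
    have h6 := Finset.card_le_card h3
    omega
  have key := count_inj n A hAcard
  set T := Finset.univ.filter
    (fun u : Fin n → Fin (4 * n - 2) => Function.Injective u ∧ ∀ i, u i ∈ A i) with hTdef
  have hTmem : ∀ u ∈ T, Function.Injective u ∧ ∀ i, u i ∉ V ∧ c s(u i, v i) = 0 := by
    intro u hu
    simp only [hTdef, hA, Finset.mem_filter, Finset.mem_univ, true_and] at hu
    exact ⟨hu.1, hu.2⟩
  set Φ : (Fin n → Fin (4 * n - 2)) → Set (Sym2 (Fin (4 * n - 2))) :=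
    fun u => Set.range (fun i => s(v i, u i)) with hΦ
  have fin2 : ∀ x : Fin 2, x = 0 ∨ x = 1 := by decide
  have hmaps : ∀ u ∈ (↑T : Set (Fin n → Fin (4 * n - 2))),
      Φ u ∈ {S | S ∈ copies (nK2 n) (4 * n - 2) ∧ ∀ e ∈ S, c e = 0} := by
    intro u hu
    obtain ⟨huinj, hup⟩ := hTmem u (by exact_mod_cast hu)
    set f : Fin n × Fin 2 → Fin (4 * n - 2) :=
      fun p => if p.2 = 0 then v p.1 else u p.1 with hf
    have hfval0 : ∀ i : Fin n, f (i, 0) = v i := fun i => by simp [hf]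
    have hfval1 : ∀ i : Fin n, f (i, 1) = u i := fun i => by simp [hf]
    have hfinj : Function.Injective f := by
      intro p q hpq
      rcases fin2 p.2 with hp2 | hp2 <;> rcases fin2 q.2 with hq2 | hq2 <;>
        rw [show p = (p.1, p.2) from rfl, show q = (q.1, q.2) from rfl, hp2, hq2] at hpq
      · rw [hfval0, hfval0] at hpq
        exact Prod.ext (hvinj hpq) (hp2.trans hq2.symm)
      · rw [hfval0, hfval1] at hpq
        exact absurd (hpq ▸ hvV p.1) (hup q.1).1
      · rw [hfval1, hfval0] at hpq
        exact absurd (hpq.symm ▸ hvV q.1) (hup p.1).1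
      · rw [hfval1, hfval1] at hpq
        exact Prod.ext (huinj hpq) (hp2.trans hq2.symm)
    have hadj : ∀ a b : Fin n × Fin 2, (nK2 n).Adj a b ↔ a ≠ b ∧ a.1 = b.1 := by
      intro a b
      constructor
      · rintro ⟨hne, h | h⟩
        · exact ⟨hne, h⟩
        · exact ⟨hne, h.symm⟩
      · rintro ⟨hne, h⟩
        exact ⟨hne, Or.inl h⟩
    have himg : Sym2.map f '' (nK2 n).edgeSet = Φ u := by
      ext e
      constructor
      · rintro ⟨e', he', rfl⟩
        induction e' using Sym2.ind with
        | _ a b =>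
          rw [SimpleGraph.mem_edgeSet, hadj] at he'
          obtain ⟨hne, h1⟩ := he'
          have h2 : a.2 ≠ b.2 := fun h => hne (Prod.ext h1 h)
          rw [Sym2.map_pair_eq]
          rcases fin2 a.2 with ha | ha <;> rcases fin2 b.2 with hb | hb
          · exact absurd (ha.trans hb.symm) h2
          · refine ⟨a.1, ?_⟩
            have e1 : f a = v a.1 := by
              rw [show a = (a.1, a.2) from rfl, ha, hfval0]
            have e2 : f b = u a.1 := by
              rw [show b = (b.1, b.2) from rfl, hb, ← h1, hfval1]
            rw [e1, e2]
          · refine ⟨a.1, ?_⟩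
            have e1 : f a = u a.1 := by
              rw [show a = (a.1, a.2) from rfl, ha, hfval1]
            have e2 : f b = v a.1 := by
              rw [show b = (b.1, b.2) from rfl, hb, ← h1, hfval0]
            rw [e1, e2, Sym2.eq_swap]
          · exact absurd (ha.trans hb.symm) h2
      · rintro ⟨i, rfl⟩
        refine ⟨s((i, (0 : Fin 2)), (i, (1 : Fin 2))), ?_, ?_⟩
        · rw [SimpleGraph.mem_edgeSet, hadj]
          exact ⟨by simp, rfl⟩
        · rw [Sym2.map_pair_eq, hfval0, hfval1]
    refine ⟨⟨f, hfinj, himg.symm⟩, ?_⟩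
    rintro e ⟨i, rfl⟩
    show c s(v i, u i) = 0
    rw [Sym2.eq_swap]
    exact (hup i).2
  have hinjOn : Set.InjOn Φ ↑T := by
    intro u hu u' hu' h
    obtain ⟨huinj, hup⟩ := hTmem u (by exact_mod_cast hu)
    obtain ⟨hu'inj, hu'p⟩ := hTmem u' (by exact_mod_cast hu')
    funext i
    have hmem : s(v i, u i) ∈ Φ u' := h ▸ ⟨i, rfl⟩
    obtain ⟨j, hj⟩ := hmem
    rw [Sym2.eq_iff] at hj
    rcases hj with ⟨h1, h2⟩ | ⟨h1, h2⟩
    · obtain rfl := hvinj h1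
      exact h2.symm
    · exact absurd (h1 ▸ hvV j) (hup i).1
  calc n ! ≤ T.card := key
    _ = (↑T : Set (Fin n → Fin (4 * n - 2))).ncard := (Set.ncard_coe_finset T).symm
    _ ≤ _ := Set.ncard_le_ncard_of_injOn Φ hmaps hinjOn (Set.toFinite _)
end

section
/- In any edge-coloring of a complete graph K_n (n ≥ 4), if a vertex v has color degree at least 3 (i.e., at least three distinct colors appear on edges incident to v), then there are at least n − 3 rainbow copies of K_{1,3} centered at v. -/
open SimpleGraph Function

lemma injOn_triple {α β : Type*} (f : α → β) (u x y : α)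
    (h1 : f u ≠ f x) (h2 : f u ≠ f y) (h3 : f x ≠ f y) :
    Set.InjOn f ({u, x, y} : Set α) := by
  intro p hp q hq hpq
  simp only [Set.mem_insert_iff, Set.mem_singleton_iff] at hp hq
  rcases hp with rfl | rfl | rfl <;> rcases hq with rfl | rfl | rfl <;>
    first | rfl | (exact absurd hpq (by tauto))

/-- If a vertex `v` of an edge-colored `K_n` (`n ≥ 4`) has color degree at least `3`,
then at least `n − 3` rainbow `K_{1,3}`'s are centered at `v`. -/
theorem rainbow_stars_at_high_color_degree {C : Type} (n : ℕ) (hn : 4 ≤ n)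
    (c : Sym2 (Fin n) → C) (v : Fin n)
    (hcd : 3 ≤ Set.ncard (c '' {e : Sym2 (Fin n) | v ∈ e ∧ ¬ e.IsDiag})) :
    n - 3 ≤ Set.ncard {T : Finset (Fin n) | T.card = 3 ∧ v ∉ T ∧
      Set.InjOn (fun u => c s(v, u)) (T : Set (Fin n))} := by
  classical
  -- every edge at v which is not a loop is of the form s(v,u), u ≠ v
  have hmem : ∀ e : Sym2 (Fin n), v ∈ e → ¬ e.IsDiag →
      ∃ u : Fin n, u ≠ v ∧ e = s(v, u) := by
    intro e hv hd
    induction e with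
    | _ x y =>
      rcases Sym2.mem_iff.mp hv with rfl | rfl
      · exact ⟨y, fun h => hd (by simp [h]), rfl⟩
      · exact ⟨x, fun h => hd (by simp [h]), Sym2.eq_swap⟩
  -- extract three vertices a b d with pairwise distinct colors
  obtain ⟨x1, hx1, x2, hx2, x3, hx3, h12, h13, h23⟩ :=
    (Set.two_lt_ncard (Set.toFinite _)).mp (by omega : 2 < Set.ncard (c '' {e : Sym2 (Fin n) | v ∈ e ∧ ¬ e.IsDiag}))
  obtain ⟨e1, ⟨he1v, he1d⟩, rfl⟩ := hx1
  obtain ⟨e2, ⟨he2v, he2d⟩, rfl⟩ := hx2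
  obtain ⟨e3, ⟨he3v, he3d⟩, rfl⟩ := hx3
  obtain ⟨a, hav, rfl⟩ := hmem e1 he1v he1d
  obtain ⟨b, hbv, rfl⟩ := hmem e2 he2v he2d
  obtain ⟨d, hdv, rfl⟩ := hmem e3 he3v he3d
  have hab : a ≠ b := fun h => h12 (by rw [h])
  have had : a ≠ d := fun h => h13 (by rw [h])
  have hbd : b ≠ d := fun h => h23 (by rw [h])
  set Tgt : Set (Finset (Fin n)) := {T : Finset (Fin n) | T.card = 3 ∧ v ∉ T ∧
      Set.InjOn (fun u => c s(v, u)) (T : Set (Fin n))} with hTgt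
  -- the base triple
  have hbase : ({a, b, d} : Finset (Fin n)) ∈ Tgt := by
    refine ⟨Finset.card_eq_three.mpr ⟨a, b, d, hab, had, hbd, rfl⟩, ?_, ?_⟩
    · simp only [Finset.mem_insert, Finset.mem_singleton]
      push_neg
      exact ⟨Ne.symm hav, Ne.symm hbv, Ne.symm hdv⟩
    · have : ((({a, b, d} : Finset (Fin n)) : Set (Fin n))) = {a, b, d} := by simp
      rw [this]
      exact injOn_triple _ a b d h12 h13 h23
  -- the map sending u to a rainbow triple containing u
  set F : Fin n → Finset (Fin n) := fun u =>
    if c s(v, u) = c s(v, a) then {u, b, d}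
    else if c s(v, u) = c s(v, b) then {u, a, d}
    else {u, a, b} with hF
  set S : Set (Fin n) := ({v, a, b, d} : Set (Fin n))ᶜ with hS
  have hS' : ∀ u ∈ S, u ≠ v ∧ u ≠ a ∧ u ≠ b ∧ u ≠ d := by
    intro u hu
    simp only [hS, Set.mem_compl_iff, Set.mem_insert_iff, Set.mem_singleton_iff] at hu
    push_neg at hu
    exact hu
  have hFmem : ∀ u ∈ S, u ∈ F u := by
    intro u _
    simp only [hF]
    split_ifs <;> simp
  have hFtgt : ∀ u ∈ S, F u ∈ Tgt := by
    intro u hu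
    obtain ⟨huv, hua, hub, hud⟩ := hS' u hu
    simp only [hF]
    split_ifs with h1 h2
    · refine ⟨Finset.card_eq_three.mpr ⟨u, b, d, hub, hud, hbd, rfl⟩, ?_, ?_⟩
      · simp only [Finset.mem_insert, Finset.mem_singleton]
        push_neg
        exact ⟨Ne.symm huv, Ne.symm hbv, Ne.symm hdv⟩
      · have : ((({u, b, d} : Finset (Fin n)) : Set (Fin n))) = {u, b, d} := by simp
        rw [this]
        exact injOn_triple _ u b d (h1 ▸ h12) (h1 ▸ h13) h23
    · refine ⟨Finset.card_eq_three.mpr ⟨u, a, d, hua, hud, had, rfl⟩, ?_, ?_⟩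
      · simp only [Finset.mem_insert, Finset.mem_singleton]
        push_neg
        exact ⟨Ne.symm huv, Ne.symm hav, Ne.symm hdv⟩
      · have : ((({u, a, d} : Finset (Fin n)) : Set (Fin n))) = {u, a, d} := by simp
        rw [this]
        exact injOn_triple _ u a d h1 (h2 ▸ h23) h13
    · refine ⟨Finset.card_eq_three.mpr ⟨u, a, b, hua, hub, hab, rfl⟩, ?_, ?_⟩
      · simp only [Finset.mem_insert, Finset.mem_singleton]
        push_neg
        exact ⟨Ne.symm huv, Ne.symm hav, Ne.symm hbv⟩
      · have : ((({u, a, b} : Finset (Fin n)) : Set (Fin n))) = {u, a, b} := by simp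
        rw [this]
        exact injOn_triple _ u a b h1 h2 h12
  have hFsub : ∀ u ∈ S, ∀ w ∈ F u, w = u ∨ w = a ∨ w = b ∨ w = d := by
    intro u _ w hw
    simp only [hF] at hw
    split_ifs at hw <;> simp only [Finset.mem_insert, Finset.mem_singleton] at hw <;> tauto
  have hFinj : Set.InjOn F S := by
    intro p hp q hq hpq
    have hqmem : q ∈ F p := hpq ▸ hFmem q hq
    obtain ⟨_, hqa, hqb, hqd⟩ := hS' q hq
    rcases hFsub p hp q hqmem with h | h | h | h
    · exact h.symm
    · exact absurd h hqa
    · exact absurd h hqb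
    · exact absurd h hqd
  -- counting
  have hsub : insert ({a, b, d} : Finset (Fin n)) (F '' S) ⊆ Tgt := by
    intro T hT
    rcases hT with rfl | ⟨u, hu, rfl⟩
    · exact hbase
    · exact hFtgt u hu
  have hnotmem : ({a, b, d} : Finset (Fin n)) ∉ F '' S := by
    rintro ⟨u, hu, hFu⟩
    obtain ⟨_, hua, hub, hud⟩ := hS' u hu
    have := hFmem u hu
    rw [hFu] at this
    simp only [Finset.mem_insert, Finset.mem_singleton] at this
    tauto
  have hScard : S.ncard = n - 4 := by
    have h4 : ({v, a, b, d} : Set (Fin n)).ncard = 4 := by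
      rw [Set.ncard_insert_of_notMem (by simp [Ne.symm hav, Ne.symm hbv, Ne.symm hdv]),
        Set.ncard_insert_of_notMem (by simp [hab, had]),
        Set.ncard_insert_of_notMem (by simp [hbd]), Set.ncard_singleton]
    have := Set.ncard_add_ncard_compl ({v, a, b, d} : Set (Fin n))
    rw [h4, Nat.card_eq_fintype_card, Fintype.card_fin] at this
    rw [← hS] at this
    omega
  have hcount : (insert ({a, b, d} : Finset (Fin n)) (F '' S)).ncard = n - 3 := by
    rw [Set.ncard_insert_of_notMem hnotmem (Set.toFinite _),
      Set.ncard_image_of_injOn hFinj, hScard]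
    omega
  calc n - 3 = (insert ({a, b, d} : Finset (Fin n)) (F '' S)).ncard := hcount.symm
    _ ≤ Tgt.ncard := Set.ncard_le_ncard hsub (Set.toFinite _)
end

section
/- For k ≥ 6, the Gallai-Ramsey multiplicity GM_k(K_3 : 2K_2) equals 3; that is, every exact k-edge-coloring of K_{k+3} contains, in total, at least 3 rainbow triangles plus monochromatic 2-matchings, and this is attained. -/
/-!
Lower bound: suppose a `k`-colouring of `K_{k+3}` had at most two monochromatic `2K₂`, and
delete one edge of each. Every colour class becomes intersecting, hence a star or a triangle.
Let `C` be the set of star centres. On the remaining `k + 3 - |C|` vertices every edge is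
deleted or lies in one of the at most `k - |C|` triangle classes, and
`2 + 3 (k - |C|) < (k + 3 - |C| choose 2)`.

Upper bound: colour `ab` by `min a b`, merging all colours `≥ k - 1`. A triangle has two edges
at its least vertex, so none is rainbow, and two disjoint edges of one colour must lie among the
top four vertices. On `k + 2` vertices there is no monochromatic `2K₂` at all (so
`gr_k = k + 3`), on `k + 3` only the three perfect matchings of the top four vertices.
-/

open SimpleGraph Function

lemma four_mul_le_succ_choose_two_add_six (m : ℕ) : 4 * m ≤ (m + 1).choose 2 + 6 := by
  rw [Nat.choose_two_right, Nat.add_sub_cancel]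
  rcases Nat.lt_or_ge m 4 with hm | hm
  · interval_cases m <;> decide
  · have h := Nat.div_add_mod ((m + 1) * m) 2
    have h2 := Nat.mod_lt ((m + 1) * m) two_pos
    nlinarith

lemma Set.Finite.exists_hitting_finset {α : Type*} {M : Set (Set α)} (hM : M.Finite)
    (hne : ∀ S ∈ M, S.Nonempty) : ∃ D : Finset α, D.card ≤ M.ncard ∧ ∀ S ∈ M, ∃ e ∈ D, e ∈ S := by
  classical
  rcases isEmpty_or_nonempty α with hα | hα
  · exact ⟨∅, by simp, fun S hS => (hne S hS).elim fun x _ => isEmptyElim x⟩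
  choose! pick hpick using hne
  refine ⟨hM.toFinset.image pick, ?_, fun S hS => ⟨pick S, ?_, hpick S hS⟩⟩
  · exact Finset.card_image_le.trans (Set.ncard_eq_toFinset_card M hM).ge
  · exact Finset.mem_image_of_mem _ (hM.mem_toFinset.2 hS)

section IntersectingEdges

variable {V : Type*}

lemma eq_of_meets_sides_of_triangle {a b d : V} {e : Sym2 V} (hab : a ≠ b) (had : a ≠ d)
    (hbd : b ≠ d) (he : ¬e.IsDiag) (h₁ : ∃ v ∈ e, v ∈ s(a, b)) (h₂ : ∃ v ∈ e, v ∈ s(b, d))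
    (h₃ : ∃ v ∈ e, v ∈ s(a, d)) : e = s(a, b) ∨ e = s(b, d) ∨ e = s(a, d) := by
  induction e with
  | _ x y =>
  simp only [Sym2.mem_iff, Sym2.mk_isDiag_iff, Sym2.eq_iff, exists_eq_or_imp,
    exists_eq_left] at *
  grind

lemma mem_of_meets_of_not_mem {a b : V} {e : Sym2 V} (h : ∃ v ∈ e, v ∈ s(a, b)) (ha : a ∉ e) :
    b ∈ e := by
  obtain ⟨v, hv, hv'⟩ := h
  rcases Sym2.mem_iff.1 hv' with rfl | rfl
  · exact absurd hv ha
  · exact hv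

/-- An intersecting family of edges is a star or a triangle. -/
theorem exists_forall_mem_or_card_le_three [DecidableEq V] (E : Finset (Sym2 V))
    (hdiag : ∀ e ∈ E, ¬e.IsDiag) (hE : ∀ e ∈ E, ∀ f ∈ E, ∃ v ∈ e, v ∈ f) :
    (∃ v, ∀ e ∈ E, v ∈ e) ∨ E.card ≤ 3 := by
  by_contra! ⟨hstar, hcard⟩
  obtain ⟨e, he⟩ := (Finset.card_pos (s := E)).1 (by omega)
  induction e with
  | _ a b =>
  have hab : a ≠ b := Sym2.mk_isDiag_iff.not.1 (hdiag _ he)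
  obtain ⟨ea, hea, ha⟩ := hstar a
  obtain ⟨d, rfl⟩ := Sym2.mem_iff_exists.1 (mem_of_meets_of_not_mem (hE _ hea _ he) ha)
  have hbd : b ≠ d := Sym2.mk_isDiag_iff.not.1 (hdiag _ hea)
  have had : a ≠ d := fun h => ha (h ▸ Sym2.mem_mk_right b d)
  obtain ⟨eb, heb, hb⟩ := hstar b
  have hadb : eb = s(a, d) := (Sym2.mem_and_mem_iff had).1
    ⟨mem_of_meets_of_not_mem ((hE _ heb _ he).imp fun _ ⟨h, h'⟩ => ⟨h, Sym2.eq_swap ▸ h'⟩) hb,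
      mem_of_meets_of_not_mem (hE _ heb _ hea) hb⟩
  subst hadb
  have hsub : E ⊆ {s(a, b), s(b, d), s(a, d)} := fun e hf => by
    simpa using eq_of_meets_sides_of_triangle hab had hbd (hdiag e hf) (hE _ hf _ he)
      (hE _ hf _ hea) (hE _ hf _ heb)
  exact absurd ((Finset.card_le_card hsub).trans Finset.card_le_three) (by omega)

end IntersectingEdges

theorem three_mul_card_le_of_hits_monochromatic_two_matchings {V ι : Type*} [Fintype V]
    [Fintype ι] (c : Sym2 V → ι) (D : Finset (Sym2 V))
    (hD : ∀ e f : Sym2 V, ¬e.IsDiag → ¬f.IsDiag → (∀ v ∈ e, v ∉ f) → c e = c f →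
      e ∈ D ∨ f ∈ D) :
    3 * Fintype.card V ≤ D.card + 3 * Fintype.card ι + 6 := by
  classical
  rcases isEmpty_or_nonempty V with hV | hV
  · simp
  set E : ι → Finset (Sym2 V) := fun i => {e | c e = i ∧ ¬e.IsDiag ∧ e ∉ D}
  have hE : ∀ i, (∃ v, ∀ e ∈ E i, v ∈ e) ∨ (E i).card ≤ 3 := by
    refine fun i => exists_forall_mem_or_card_le_three _ (by simp +contextual [E])
      fun e he f hf => ?_
    simp only [E, Finset.mem_filter, Finset.mem_univ, true_and] at he hf
    by_contra! hdisj
    exact (hD e f he.2.1 hf.2.1 hdisj (he.1.trans hf.1.symm)).elim he.2.2 hf.2.2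
  set stars : Finset ι := {i | ∃ v, ∀ e ∈ E i, v ∈ e}
  choose! center hcenter using fun i (hi : i ∈ stars) => (Finset.mem_filter.1 hi).2
  set C := stars.image center
  have hcover : Cᶜ.sym2 ⊆ D ∪ Cᶜ.image Sym2.diag ∪ starsᶜ.biUnion E := by
    intro e he
    have heC := Finset.mem_sym2_iff.1 he
    by_cases heD : e ∈ D
    · simp [heD]
    by_cases hdiag : e.IsDiag
    · rw [← Sym2.diag_diagElem hdiag] at he ⊢
      exact Finset.mem_union_left _ <| Finset.mem_union_right _ <|
        Finset.mem_image_of_mem _ (Finset.diag_mem_sym2_iff.1 he)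
    have hce : c e ∉ stars := fun hstar =>
      Finset.mem_compl.1 (heC _ (hcenter _ hstar e (by simp [E, hdiag, heD])))
        (Finset.mem_image_of_mem center hstar)
    simp only [Finset.mem_union, Finset.mem_biUnion]
    exact Or.inr ⟨c e, Finset.mem_compl.2 hce, by simp [E, hdiag, heD]⟩
  have hclasses : (starsᶜ.biUnion E).card ≤ 3 * starsᶜ.card := by
    refine Finset.card_biUnion_le.trans ?_
    rw [mul_comm, ← smul_eq_mul]
    exact Finset.sum_le_card_nsmul _ _ _ fun i hi =>
      (hE i).resolve_left (by simpa [stars] using hi)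
  have hcount := (Finset.card_le_card hcover).trans <| (Finset.card_union_le _ _).trans <|
    add_le_add ((Finset.card_union_le _ _).trans (Nat.add_le_add_left Finset.card_image_le _))
      hclasses
  have hC : C.card ≤ stars.card := Finset.card_image_le
  have := four_mul_le_succ_choose_two_add_six Cᶜ.card
  rw [Finset.card_sym2] at hcount
  simp only [Finset.card_compl] at hcount this
  have := Finset.card_le_univ C
  have := Finset.card_le_univ stars
  omega

namespace GR

lemma nK2_two_edgeSet : (nK2 2).edgeSet = {s((0, 0), (0, 1)), s((1, 0), (1, 1))} := by
  ext e
  induction e with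
  | _ x y =>
    simp only [mem_edgeSet, nK2, fromRel_adj, Set.mem_insert_iff, Set.mem_singleton_iff]
    revert x y; decide

lemma K3_edgeSet : K3.edgeSet = {s(0, 1), s(0, 2), s(1, 2)} := by
  ext e
  induction e with
  | _ x y =>
    simp only [mem_edgeSet, K3, completeGraph, top_adj, Set.mem_insert_iff,
      Set.mem_singleton_iff]
    revert x y; decide

section Copies

variable {n : ℕ} {C : Type}

lemma isMonoCopy_nK2_two_iff (c : Sym2 (Fin n) → C) (S : Set (Sym2 (Fin n))) :
    IsMonoCopy (nK2 2) c S ↔ ∃ a b a' b' : Fin n, a ≠ b ∧ a' ≠ b' ∧ a ≠ a' ∧ a ≠ b' ∧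
      b ≠ a' ∧ b ≠ b' ∧ c s(a, b) = c s(a', b') ∧ S = {s(a, b), s(a', b')} := by
  constructor
  · rintro ⟨⟨f, hf, rfl⟩, col, hcol⟩
    simp only [nK2_two_edgeSet, Set.image_insert_eq, Set.image_singleton, Sym2.map_mk,
      Set.mem_insert_iff, Set.mem_singleton_iff, forall_eq_or_imp, forall_eq] at hcol ⊢
    exact ⟨_, _, _, _, hf.ne (by decide), hf.ne (by decide), hf.ne (by decide),
      hf.ne (by decide), hf.ne (by decide), hf.ne (by decide), hcol.1.trans hcol.2.symm, rfl⟩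
  · rintro ⟨a, b, a', b', h₁, h₂, h₃, h₄, h₅, h₆, hc, rfl⟩
    refine ⟨⟨fun p => ![![a, b], ![a', b']] p.1 p.2, ?_, ?_⟩, c s(a, b), ?_⟩
    · rintro ⟨x₁, x₂⟩ ⟨y₁, y₂⟩ h
      fin_cases x₁ <;> fin_cases x₂ <;> fin_cases y₁ <;> fin_cases y₂ <;> simp_all
    · simp [nK2_two_edgeSet, Set.image_insert_eq]
    · simp [hc]

lemma exists_of_isRainbowCopy_K3 {c : Sym2 (Fin n) → C} {S : Set (Sym2 (Fin n))}
    (h : IsRainbowCopy K3 c S) : ∃ a b d : Fin n, a ≠ b ∧ a ≠ d ∧ b ≠ d ∧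
      Set.InjOn c {s(a, b), s(a, d), s(b, d)} := by
  obtain ⟨⟨f, hf, rfl⟩, hinj⟩ := h
  refine ⟨f 0, f 1, f 2, hf.ne (by decide), hf.ne (by decide), hf.ne (by decide), ?_⟩
  simpa [K3_edgeSet, Set.image_insert_eq] using hinj

theorem three_mul_le_monoCopyCount [Fintype C] (c : Sym2 (Fin n) → C) :
    3 * n ≤ monoCopyCount (nK2 2) c + 3 * Fintype.card C + 6 := by
  obtain ⟨D, hDcard, hD⟩ := (Set.toFinite {S | IsMonoCopy (nK2 2) c S}).exists_hitting_finset
    fun S hS => by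
      obtain ⟨a, b, -, -, -, -, -, -, -, -, -, rfl⟩ := (isMonoCopy_nK2_two_iff c S).1 hS
      exact Set.insert_nonempty _ _
  have := three_mul_card_le_of_hits_monochromatic_two_matchings c D fun e f he hf hef hc => by
    induction e with | _ a b => induction f with | _ a' b' =>
    simp only [Sym2.mk_isDiag_iff, Sym2.mem_iff, forall_eq_or_imp, forall_eq] at he hf hef
    obtain ⟨g, hgD, hg⟩ := hD _ <| (isMonoCopy_nK2_two_iff c _).2
      ⟨a, b, a', b', he, hf, by tauto, by tauto, by tauto, by tauto, hc, rfl⟩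
    rcases hg with rfl | rfl
    exacts [Or.inl hgD, Or.inr hgD]
  rw [Fintype.card_fin] at this
  exact this.trans (by unfold monoCopyCount; omega)

lemma three_le_monoCopyCount {m : ℕ} (c : Sym2 (Fin (m + 4)) → Fin (m + 1)) :
    3 ≤ monoCopyCount (nK2 2) c := by
  have := three_mul_le_monoCopyCount c
  rw [Fintype.card_fin] at this
  omega

end Copies

def minColoring (m n : ℕ) : Sym2 (Fin n) → Fin (m + 1) :=
  Sym2.lift ⟨fun a b => ⟨min (min a b) m, by omega⟩, fun a b => by simp [min_comm (a : ℕ)]⟩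

section MinColoring

variable {m n : ℕ}

@[simp]
lemma minColoring_mk_val (a b : Fin n) :
    (minColoring m n s(a, b) : ℕ) = min (min (a : ℕ) b) m := rfl

lemma not_isRainbowCopy_K3_minColoring (S : Set (Sym2 (Fin n))) :
    ¬IsRainbowCopy K3 (minColoring m n) S := by
  intro h
  obtain ⟨a, b, d, hab, had, hbd, hinj⟩ := exists_of_isRainbowCopy_K3 h
  have : minColoring m n s(a, b) = minColoring m n s(a, d) ∨
      minColoring m n s(a, b) = minColoring m n s(b, d) ∨
      minColoring m n s(a, d) = minColoring m n s(b, d) := by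
    simp only [Fin.ext_iff, minColoring_mk_val]
    omega
  rcases this with h | h | h <;> have := hinj (by simp) (by simp) h <;>
    simp only [Sym2.eq_iff] at this <;> tauto

lemma le_of_minColoring_eq {a b a' b' : Fin n} (h₁ : a ≠ a') (h₂ : a ≠ b') (h₃ : b ≠ a')
    (h₄ : b ≠ b') (hc : minColoring m n s(a, b) = minColoring m n s(a', b')) :
    m ≤ a ∧ m ≤ b ∧ m ≤ a' ∧ m ≤ b' := by
  simp only [Fin.ext_iff, minColoring_mk_val] at hc
  omega

lemma not_isMonoCopy_minColoring (hn : n ≤ m + 3) (S : Set (Sym2 (Fin n))) :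
    ¬IsMonoCopy (nK2 2) (minColoring m n) S := by
  rw [isMonoCopy_nK2_two_iff]
  rintro ⟨a, b, a', b', h₁, h₂, h₃, h₄, h₅, h₆, hc, -⟩
  have := le_of_minColoring_eq h₃ h₄ h₅ h₆ hc
  simp only [ne_eq, Fin.ext_iff] at h₁ h₂ h₃ h₄ h₅ h₆
  omega

lemma surjective_minColoring (hn : m < n) : Surjective (minColoring m n) := fun i =>
  ⟨s(⟨i, by omega⟩, ⟨i, by omega⟩), Fin.ext (by simp [Fin.is_le])⟩

lemma rainbowCopyCount_minColoring : rainbowCopyCount K3 (minColoring m n) = 0 := by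
  simp [rainbowCopyCount, not_isRainbowCopy_K3_minColoring]

def topMatchings (m : ℕ) : Set (Set (Sym2 (Fin (m + 4)))) :=
  {{s(Fin.natAdd m 0, Fin.natAdd m 1), s(Fin.natAdd m 2, Fin.natAdd m 3)},
    {s(Fin.natAdd m 0, Fin.natAdd m 2), s(Fin.natAdd m 1, Fin.natAdd m 3)},
    {s(Fin.natAdd m 0, Fin.natAdd m 3), s(Fin.natAdd m 1, Fin.natAdd m 2)}}

lemma ncard_topMatchings_le : (topMatchings m).ncard ≤ 3 :=
  (Set.ncard_insert_le _ _).trans <| Nat.succ_le_succ <|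
    (Set.ncard_insert_le _ _).trans (by rw [Set.ncard_singleton])

lemma pair_mem_topMatchings {b a' b' : Fin (m + 4)} (hb : m < b) (ha' : m < a') (hb' : m < b')
    (h₁ : (b : ℕ) ≠ a') (h₂ : (b : ℕ) ≠ b') (h₃ : (a' : ℕ) ≠ b') :
    {s(Fin.natAdd m 0, b), s(a', b')} ∈ topMatchings m := by
  have : (b = Fin.natAdd m 1 ∧ s(a', b') = s(Fin.natAdd m 2, Fin.natAdd m 3)) ∨
      (b = Fin.natAdd m 2 ∧ s(a', b') = s(Fin.natAdd m 1, Fin.natAdd m 3)) ∨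
      (b = Fin.natAdd m 3 ∧ s(a', b') = s(Fin.natAdd m 1, Fin.natAdd m 2)) := by
    simp only [Sym2.eq_iff, Fin.ext_iff, Fin.val_natAdd]
    omega
  rcases this with ⟨rfl, h⟩ | ⟨rfl, h⟩ | ⟨rfl, h⟩ <;> simp [topMatchings, h]

lemma isMonoCopy_minColoring_mem_topMatchings {S : Set (Sym2 (Fin (m + 4)))}
    (hS : IsMonoCopy (nK2 2) (minColoring m (m + 4)) S) : S ∈ topMatchings m := by
  obtain ⟨a, b, a', b', h₁, h₂, h₃, h₄, h₅, h₆, hc, rfl⟩ := (isMonoCopy_nK2_two_iff _ _).1 hS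
  have := le_of_minColoring_eq h₃ h₄ h₅ h₆ hc
  simp only [ne_eq, Fin.ext_iff] at h₁ h₂ h₃ h₄ h₅ h₆
  have hw (v : Fin (m + 4)) (hv : (v : ℕ) = m) : v = Fin.natAdd m 0 := Fin.ext (by simp [hv])
  -- four distinct vertices `≥ m` of `Fin (m + 4)`: one of them is `m`
  obtain ha | hb | ha' | hb' : (a : ℕ) = m ∨ (b : ℕ) = m ∨ (a' : ℕ) = m ∨ (b' : ℕ) = m := by
    omega
  · rw [hw a ha]
    apply pair_mem_topMatchings <;> omega
  · rw [Sym2.eq_swap, hw b hb]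
    apply pair_mem_topMatchings <;> omega
  · rw [Set.pair_comm, hw a' ha']
    apply pair_mem_topMatchings <;> omega
  · rw [Set.pair_comm, Sym2.eq_swap, hw b' hb']
    apply pair_mem_topMatchings <;> omega

lemma monoCopyCount_minColoring_le : monoCopyCount (nK2 2) (minColoring m (m + 4)) ≤ 3 :=
  (Set.ncard_le_ncard (fun _ => isMonoCopy_minColoring_mem_topMatchings) (Set.toFinite _)).trans
    ncard_topMatchings_le

end MinColoring

lemma gr_K3_nK2_two (m : ℕ) : gr (m + 1) K3 (nK2 2) = m + 4 := by
  refine IsLeast.csInf_eq ⟨fun c => Or.inr ?_, fun n hn => ?_⟩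
  · exact Set.nonempty_of_ncard_ne_zero (three_pos.trans_le (three_le_monoCopyCount c)).ne'
  · by_contra! hlt
    rcases hn (minColoring m n) with ⟨S, hS⟩ | ⟨S, hS⟩
    · exact not_isRainbowCopy_K3_minColoring S hS
    · exact not_isMonoCopy_minColoring (by omega) S hS

end GR

open GR in
/-- For `k ≥ 6`, the Gallai-Ramsey multiplicity `GM_k(K₃ : 2K₂)` equals `3`. -/
theorem GM_triangle_two_matching (k : ℕ) (hk : 6 ≤ k) :
    GM k K3 (nK2 2) = 3 := by
  obtain ⟨m, rfl⟩ : ∃ m, k = m + 1 := ⟨k - 1, by omega⟩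
  rw [GM, gr_K3_nK2_two]
  refine IsLeast.csInf_eq ⟨⟨minColoring m (m + 4), surjective_minColoring (by omega), ?_⟩, ?_⟩
  · rw [rainbowCopyCount_minColoring, zero_add]
    exact (monoCopyCount_minColoring_le.antisymm (three_le_monoCopyCount _)).symm
  · rintro t ⟨c, -, rfl⟩
    exact (three_le_monoCopyCount c).trans (Nat.le_add_left _ _)
end
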